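/- arXiv:2001.01874 — 5 statements merged into one kernel-verified Lean document; each statement's English description precedes it below -/
import Mathlib

section
/- For any word W of finite length over an alphabet D (a word being a finite sequence of letters a or a^{-1} for a ∈ D), W represents the identity element of the free group on D if and only if there exists a noncrossing inverse pairing Γ on the index set of W whose union is the whole index set; here a noncrossing inverse pairing is a collection of disjoint two-element subsets {i,j} of indices with W(i) = W(j)^{-1}, such that no two pairs {i₀,j₀}, {i₁,j₁} with i₀<j₀, i₁<j₁ cross (i.e. we never have i₀<i₁<j₀<j₁), and such that every index between the two elements of a pair is itself covered by some pair. -/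
/-! Both directions go through the reduction relation `FreeGroup.Red W []`. Cancelling an
adjacent inverse pair from `L₁ ++ x :: y :: L₂` corresponds to removing the pair
`(|L₁|, |L₁| + 1)` from a pairing and reindexing the other pairs along the strictly monotone
embedding that skips these two indices; reindexing along a strictly monotone map preserves
noncrossing pairings. Conversely, a fully covering pairing of a nonempty word always contains
an adjacent pair, so the word can be cancelled down to the empty word pair by pair. -/

namespace EarringPaper

variable {D : Type*}

/-- A letter over the alphabet `D`: a generator together with a sign. -/
abbrev Letter (D : Type*) := D × Bool

/-- `x` and `y` are formal inverses of each other. -/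
def IsInvLetter (x y : Letter D) : Prop := x.1 = y.1 ∧ x.2 = !y.2

/-- A noncrossing inverse pairing on the word `W`, presented as a set of ordered pairs
`(i, j)` of indices with `i < j`. -/
structure NCIP (W : List (Letter D)) (Γ : Set (Fin W.length × Fin W.length)) : Prop where
  /-- pairs are recorded with the smaller index first -/
  lt : ∀ p ∈ Γ, p.1 < p.2
  /-- paired letters are formal inverses -/
  inv : ∀ p ∈ Γ, IsInvLetter (W.get p.1) (W.get p.2)
  /-- distinct pairs are disjoint -/
  disj : ∀ p ∈ Γ, ∀ q ∈ Γ, p ≠ q → p.1 ≠ q.1 ∧ p.1 ≠ q.2 ∧ p.2 ≠ q.1 ∧ p.2 ≠ q.2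
  /-- no two pairs cross: never `i₀ < i₁ < j₀ < j₁` -/
  noncross : ∀ p ∈ Γ, ∀ q ∈ Γ, ¬(p.1 < q.1 ∧ q.1 < p.2 ∧ p.2 < q.2)
  /-- every index lying between the two elements of a pair is covered by some pair -/
  covered : ∀ p ∈ Γ, ∀ k, p.1 ≤ k → k ≤ p.2 → ∃ q ∈ Γ, q.1 = k ∨ q.2 = k

lemma mk_eq_one_iff_red_nil {α : Type*} {L : List (α × Bool)} :
    FreeGroup.mk L = 1 ↔ FreeGroup.Red L [] := by
  rw [FreeGroup.one_eq_mk, FreeGroup.Red.exact]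
  refine ⟨fun ⟨L', hL, hnil⟩ => ?_, fun h => ⟨[], h, FreeGroup.Red.refl⟩⟩
  rwa [FreeGroup.Red.nil_iff.mp hnil] at hL

lemma exists_eq_append_cons_cons {α : Type*} {W : List α} {i : ℕ} {x y : α}
    (hx : W[i]? = some x) (hy : W[i + 1]? = some y) :
    ∃ L₁ L₂, W = L₁ ++ x :: y :: L₂ ∧ L₁.length = i := by
  obtain ⟨hi, rfl⟩ := List.getElem?_eq_some_iff.mp hx
  obtain ⟨hi', rfl⟩ := List.getElem?_eq_some_iff.mp hy
  refine ⟨W.take i, W.drop (i + 2), ?_, by simp only [List.length_take]; omega⟩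
  rw [← List.drop_eq_getElem_cons hi', ← List.drop_eq_getElem_cons hi, List.take_append_drop]

lemma IsInvLetter.red_step {x y : Letter D} (h : IsInvLetter x y) (L₁ L₂ : List (Letter D)) :
    FreeGroup.Red.Step (L₁ ++ x :: y :: L₂) (L₁ ++ L₂) := by
  obtain ⟨a, b⟩ := x
  obtain ⟨a', b'⟩ := y
  obtain ⟨rfl, rfl⟩ : a = a' ∧ b = !b' := h
  exact FreeGroup.Red.Step.not_rev

structure IsNoncrossingPairing {α : Type*} [LinearOrder α] (Γ : Set (α × α)) : Prop where
  lt : ∀ p ∈ Γ, p.1 < p.2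
  disj : ∀ p ∈ Γ, ∀ q ∈ Γ, p ≠ q → p.1 ≠ q.1 ∧ p.1 ≠ q.2 ∧ p.2 ≠ q.1 ∧ p.2 ≠ q.2
  noncross : ∀ p ∈ Γ, ∀ q ∈ Γ, ¬(p.1 < q.1 ∧ q.1 < p.2 ∧ p.2 < q.2)

namespace IsNoncrossingPairing

section Reindex

variable {α β : Type*} [LinearOrder α] [LinearOrder β] {e : α → β}

lemma image {Γ : Set (α × α)} (h : IsNoncrossingPairing Γ) (he : StrictMono e) :
    IsNoncrossingPairing (Prod.map e e '' Γ) where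
  lt := by
    rintro _ ⟨p, hp, rfl⟩
    exact he (h.lt p hp)
  disj := by
    rintro _ ⟨p, hp, rfl⟩ _ ⟨q, hq, rfl⟩ hpq
    simpa only [Prod.map_fst, Prod.map_snd, he.injective.ne_iff]
      using h.disj p hp q hq (ne_of_apply_ne _ hpq)
  noncross := by
    rintro _ ⟨p, hp, rfl⟩ _ ⟨q, hq, rfl⟩
    simpa only [Prod.map_fst, Prod.map_snd, he.lt_iff_lt] using h.noncross p hp q hq

lemma preimage {Γ : Set (β × β)} (h : IsNoncrossingPairing Γ) (he : StrictMono e) :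
    IsNoncrossingPairing (Prod.map e e ⁻¹' Γ) where
  lt p hp := he.lt_iff_lt.mp (h.lt _ hp)
  disj p hp q hq hpq := by
    simpa only [Prod.map_fst, Prod.map_snd, he.injective.ne_iff]
      using h.disj _ hp _ hq fun heq => hpq <|
        Prod.ext (he.injective congr($heq.1)) (he.injective congr($heq.2))
  noncross p hp q hq := by
    simpa only [Prod.map_fst, Prod.map_snd, he.lt_iff_lt] using h.noncross _ hp _ hq

end Reindex

variable {Γ : Set (ℕ × ℕ)}

lemma insert_adjacent (h : IsNoncrossingPairing Γ) {i : ℕ}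
    (hfree : ∀ p ∈ Γ, p.1 ≠ i ∧ p.1 ≠ i + 1 ∧ p.2 ≠ i ∧ p.2 ≠ i + 1) :
    IsNoncrossingPairing (insert (i, i + 1) Γ) where
  lt := by
    rintro p (rfl | hp)
    · exact Nat.lt_succ_self i
    · exact h.lt p hp
  disj := by
    rintro p (rfl | hp) q (rfl | hq) hpq
    · exact absurd rfl hpq
    · have := hfree q hq; omega
    · have := hfree p hp; omega
    · exact h.disj p hp q hq hpq
  noncross := by
    rintro p (rfl | hp) q (rfl | hq)
    · omega
    · have := hfree q hq; omega
    · have := hfree p hp; omega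
    · exact h.noncross p hp q hq

/-- A pair of minimal length is adjacent: a pair through the index after its left end would
be shorter or would cross it. -/
lemma exists_adjacent_mem (h : IsNoncrossingPairing Γ)
    (hcov : ∀ p ∈ Γ, ∀ k, p.1 < k → k < p.2 → ∃ q ∈ Γ, q.1 = k ∨ q.2 = k)
    (hne : Γ.Nonempty) : ∃ i, (i, i + 1) ∈ Γ := by
  obtain ⟨⟨a, b⟩, hp, hmin⟩ := (measure fun p : ℕ × ℕ => p.2 - p.1).wf.has_min Γ hne
  have hab : a < b := h.lt _ hp
  suffices b = a + 1 from ⟨a, this ▸ hp⟩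
  by_contra hb
  obtain ⟨q, hq, hqk⟩ := hcov _ hp (a + 1) (Nat.lt_succ_self a) (by omega)
  have hqp : q ≠ (a, b) := by rintro rfl; omega
  have hd := h.disj q hq _ hp hqp
  have := h.lt q hq
  have := h.noncross _ hp q hq
  have := h.noncross q hq _ hp
  have : ¬ q.2 - q.1 < b - a := hmin q hq
  dsimp only at *
  omega

end IsNoncrossingPairing

def skipTwo (i k : ℕ) : ℕ := if k < i then k else k + 2

lemma strictMono_skipTwo (i : ℕ) : StrictMono (skipTwo i) := by
  intro a b hab
  unfold skipTwo
  split_ifs <;> omega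

lemma skipTwo_ne (i k : ℕ) : skipTwo i k ≠ i ∧ skipTwo i k ≠ i + 1 := by
  unfold skipTwo
  split_ifs <;> omega

lemma mem_range_skipTwo {i k : ℕ} : k ∈ Set.range (skipTwo i) ↔ k ≠ i ∧ k ≠ i + 1 := by
  refine ⟨by rintro ⟨k, rfl⟩; exact skipTwo_ne i k, fun hk => ?_⟩
  refine ⟨if k < i then k else k - 2, ?_⟩
  unfold skipTwo
  split_ifs <;> omega

lemma skipTwo_lt_iff {i n k : ℕ} (hi : i ≤ n) : skipTwo i k < n + 2 ↔ k < n := by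
  unfold skipTwo
  split_ifs <;> omega

lemma getElem?_append_cons_cons_skipTwo {α : Type*} (L₁ L₂ : List α) (x y : α) (k : ℕ) :
    (L₁ ++ x :: y :: L₂)[skipTwo L₁.length k]? = (L₁ ++ L₂)[k]? := by
  unfold skipTwo
  split_ifs with hk
  · rw [List.getElem?_append_left hk, List.getElem?_append_left hk]
  · rw [List.getElem?_append_right (by omega), List.getElem?_append_right (by omega),
      show k + 2 - L₁.length = k - L₁.length + 2 by omega]
    rfl

/-- `NCIP` together with full coverage, indexed by `ℕ` so that pairings of words of different
lengths can be transported along maps `ℕ → ℕ`. The field `covered` of `NCIP` follows from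
`cover`. -/
structure IsFullPairing (W : List (Letter D)) (Γ : Set (ℕ × ℕ)) : Prop
    extends IsNoncrossingPairing Γ where
  inv : ∀ p ∈ Γ, ∃ x y, W[p.1]? = some x ∧ W[p.2]? = some y ∧ IsInvLetter x y
  cover : ∀ k < W.length, ∃ p ∈ Γ, p.1 = k ∨ p.2 = k

namespace IsFullPairing

variable {W : List (Letter D)} {Γ : Set (ℕ × ℕ)}

lemma snd_lt_length (h : IsFullPairing W Γ) {p : ℕ × ℕ} (hp : p ∈ Γ) : p.2 < W.length := by
  obtain ⟨x, y, -, hy, -⟩ := h.inv p hp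
  exact (List.getElem?_eq_some_iff.mp hy).1

lemma exists_adjacent_mem (h : IsFullPairing W Γ) (hW : W ≠ []) : ∃ i, (i, i + 1) ∈ Γ := by
  refine h.toIsNoncrossingPairing.exists_adjacent_mem
    (fun p hp k _ hk => h.cover k (hk.trans (h.snd_lt_length hp))) ?_
  obtain ⟨p, hp, -⟩ := h.cover 0 (List.length_pos_iff.mpr hW)
  exact ⟨p, hp⟩

variable {L₁ L₂ : List (Letter D)} {x y : Letter D}

lemma insert_adjacent (h : IsFullPairing (L₁ ++ L₂) Γ) (hxy : IsInvLetter x y) :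
    IsFullPairing (L₁ ++ x :: y :: L₂) (insert (L₁.length, L₁.length + 1)
      (Prod.map (skipTwo L₁.length) (skipTwo L₁.length) '' Γ)) where
  toIsNoncrossingPairing := by
    refine (h.image (strictMono_skipTwo _)).insert_adjacent ?_
    rintro _ ⟨p, -, rfl⟩
    exact ⟨(skipTwo_ne _ _).1, (skipTwo_ne _ _).2, (skipTwo_ne _ _).1, (skipTwo_ne _ _).2⟩
  inv := by
    rintro _ (rfl | ⟨p, hp, rfl⟩)
    · exact ⟨x, y, by simp, by simp, hxy⟩
    · simpa only [Prod.map_fst, Prod.map_snd, getElem?_append_cons_cons_skipTwo] using h.inv p hp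
  cover := by
    intro k hk
    by_cases hnew : k = L₁.length ∨ k = L₁.length + 1
    · exact ⟨_, Set.mem_insert _ _, hnew.imp Eq.symm Eq.symm⟩
    obtain ⟨k, rfl⟩ := mem_range_skipTwo.mpr (not_or.mp hnew)
    have hk : k < (L₁ ++ L₂).length := by
      simp only [List.length_append, List.length_cons] at hk ⊢
      exact (skipTwo_lt_iff (Nat.le_add_right _ _)).mp (by omega)
    obtain ⟨p, hp, hpk⟩ := h.cover k hk
    refine ⟨Prod.map (skipTwo L₁.length) (skipTwo L₁.length) p, Or.inr ⟨p, hp, rfl⟩, ?_⟩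
    rcases hpk with rfl | rfl <;> simp

lemma preimage_skipTwo (h : IsFullPairing (L₁ ++ x :: y :: L₂) Γ)
    (hadj : (L₁.length, L₁.length + 1) ∈ Γ) :
    IsFullPairing (L₁ ++ L₂) (Prod.map (skipTwo L₁.length) (skipTwo L₁.length) ⁻¹' Γ) where
  toIsNoncrossingPairing := h.preimage (strictMono_skipTwo _)
  inv p hp := by
    simpa only [Prod.map_fst, Prod.map_snd, getElem?_append_cons_cons_skipTwo] using h.inv _ hp
  cover := by
    intro k hk
    have hk' : skipTwo L₁.length k < (L₁ ++ x :: y :: L₂).length := by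
      simp only [List.length_append, List.length_cons] at hk ⊢
      exact (skipTwo_lt_iff (Nat.le_add_right _ _)).mpr (by omega)
    obtain ⟨q, hq, hqk⟩ := h.cover _ hk'
    have hkfree := skipTwo_ne L₁.length k
    have hqne : q ≠ (L₁.length, L₁.length + 1) := by
      rintro rfl
      rcases hqk with h' | h' <;> simp only at h' <;> omega
    obtain ⟨h₁, h₂, h₃, h₄⟩ := h.disj q hq _ hadj hqne
    obtain ⟨a, ha⟩ := mem_range_skipTwo.mpr ⟨h₁, h₂⟩
    obtain ⟨b, hb⟩ := mem_range_skipTwo.mpr ⟨h₃, h₄⟩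
    refine ⟨(a, b), by simpa [ha, hb] using hq, ?_⟩
    rw [← ha, ← hb, (strictMono_skipTwo _).injective.eq_iff,
      (strictMono_skipTwo _).injective.eq_iff] at hqk
    exact hqk

end IsFullPairing

theorem IsFullPairing.red_nil {W : List (Letter D)} {Γ : Set (ℕ × ℕ)} (h : IsFullPairing W Γ) :
    FreeGroup.Red W [] := by
  rcases eq_or_ne W [] with rfl | hW
  · exact FreeGroup.Red.refl
  obtain ⟨i, hadj⟩ := h.exists_adjacent_mem hW
  obtain ⟨x, y, hx, hy, hxy⟩ := h.inv _ hadj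
  obtain ⟨L₁, L₂, rfl, rfl⟩ := exists_eq_append_cons_cons hx hy
  exact (hxy.red_step L₁ L₂).to_red.trans (red_nil (h.preimage_skipTwo hadj))
termination_by W.length
decreasing_by simp_all

lemma exists_isFullPairing_of_red_nil {W : List (Letter D)} (h : FreeGroup.Red W []) :
    ∃ Γ, IsFullPairing W Γ := by
  induction h using Relation.ReflTransGen.head_induction_on with
  | refl => exact ⟨∅, ⟨by simp, by simp, by simp⟩, by simp, by simp⟩
  | head hstep _ ih =>
    obtain ⟨Γ, hΓ⟩ := ih
    cases hstep with
    | not => exact ⟨_, hΓ.insert_adjacent (by simp [IsInvLetter])⟩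

lemma exists_ncip_iff_exists_isFullPairing (W : List (Letter D)) :
    (∃ Γ : Set (Fin W.length × Fin W.length), NCIP W Γ ∧
        ∀ k : Fin W.length, ∃ p ∈ Γ, p.1 = k ∨ p.2 = k) ↔
      ∃ Γ, IsFullPairing W Γ := by
  constructor
  · rintro ⟨Γ, hΓ, hcov⟩
    refine ⟨Prod.map Fin.val Fin.val '' Γ,
      IsNoncrossingPairing.image ⟨hΓ.lt, hΓ.disj, hΓ.noncross⟩ Fin.val_strictMono, ?_, ?_⟩
    · rintro _ ⟨p, hp, rfl⟩
      exact ⟨_, _, List.getElem?_eq_getElem p.1.isLt, List.getElem?_eq_getElem p.2.isLt,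
        hΓ.inv p hp⟩
    · intro k hk
      obtain ⟨p, hp, hpk⟩ := hcov ⟨k, hk⟩
      exact ⟨_, ⟨p, hp, rfl⟩, hpk.imp (congrArg Fin.val) (congrArg Fin.val)⟩
  · rintro ⟨Γ, hΓ⟩
    have hcov (k : Fin W.length) :
        ∃ p ∈ Prod.map Fin.val Fin.val ⁻¹' Γ, p.1 = k ∨ p.2 = k := by
      obtain ⟨p, hp, hpk⟩ := hΓ.cover k k.isLt
      have h₂ := hΓ.snd_lt_length hp
      have h₁ := (hΓ.lt p hp).trans h₂
      exact ⟨(⟨p.1, h₁⟩, ⟨p.2, h₂⟩), hp, hpk.imp Fin.ext Fin.ext⟩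
    refine ⟨_, ⟨?_, ?_, ?_, ?_, fun _ _ k _ _ => hcov k⟩, hcov⟩
    · exact (hΓ.preimage Fin.val_strictMono).lt
    · intro p hp
      obtain ⟨x, y, hx, hy, hxy⟩ := hΓ.inv _ hp
      rw [Prod.map_fst, List.getElem?_eq_getElem p.1.isLt, Option.some_inj] at hx
      rw [Prod.map_snd, List.getElem?_eq_getElem p.2.isLt, Option.some_inj] at hy
      simpa only [List.get_eq_getElem, hx, hy] using hxy
    · exact (hΓ.preimage Fin.val_strictMono).disj
    · exact (hΓ.preimage Fin.val_strictMono).noncross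

/-- A finite word represents the identity of the free group iff it carries a noncrossing
inverse pairing whose union is the whole index set. -/
theorem word_eq_one_iff_exists_ncip (W : List (Letter D)) :
    FreeGroup.mk W = 1 ↔
      ∃ Γ : Set (Fin W.length × Fin W.length), NCIP W Γ ∧
        ∀ k : Fin W.length, ∃ p ∈ Γ, p.1 = k ∨ p.2 = k := by
  rw [exists_ncip_iff_exists_isFullPairing, mk_eq_one_iff_red_nil]
  exact ⟨exists_isFullPairing_of_red_nil, fun ⟨_, h⟩ => h.red_nil⟩

end EarringPaper
end

section
/- Let W be a finite word over an alphabet D and let Γ be a maximal noncrossing inverse pairing on W (maximal with respect to inclusion among noncrossing inverse pairings). Let W₀ be the subword of W obtained by restricting W to the indices not covered by any pair of Γ. Then W₀ represents the same element of the free group on D as W, and W₀ is a reduced word. -/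
/-! Take a pair of `Γ` whose ends are adjacent among the indices still present. Its two letters
cancel, and the remaining pairs form a noncrossing
inverse pairing of the shorter word with the same uncovered letters, so induction shows that `W₀`
and `W` agree in the free group. If two consecutive letters of `W₀` were inverse, everything
between them would be covered, so they could be added to `Γ` as a new pair, against
maximality. -/

namespace EarringPaper

variable {D : Type*}

/-- A word is reduced if no two consecutive letters are formal inverses of each other. -/
def IsReduced (L : List (Letter D)) : Prop := List.Chain' (fun x y => ¬IsInvLetter x y) L

theorem mk_append_cons_cons_of_isInvLetter {A B : List (Letter D)} {x y : Letter D}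
    (h : IsInvLetter x y) : FreeGroup.mk (A ++ x :: y :: B) = FreeGroup.mk (A ++ B) := by
  obtain ⟨x₁, x₂⟩ := x
  obtain ⟨y₁, y₂⟩ := y
  obtain ⟨rfl, rfl⟩ : x₁ = y₁ ∧ x₂ = !y₂ := h
  exact Quot.sound FreeGroup.Red.Step.not_rev

theorem ne_of_nodup_append_cons_cons {α : Type*} {l₁ l₂ : List α} {a b c : α}
    (hl : (l₁ ++ a :: b :: l₂).Nodup) (hc : c ∈ l₁ ++ l₂) : c ≠ a ∧ c ≠ b := by
  simp only [List.nodup_append, List.nodup_cons, List.mem_cons, List.mem_append] at hl hc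
  grind

section Sorted

variable {α : Type*} [LinearOrder α] {l l₁ l₂ : List α} {a b c : α}

theorem exists_eq_append_cons_cons_of_pairwise_lt (hl : l.Pairwise (· < ·)) (ha : a ∈ l)
    (hb : b ∈ l) (hab : a < b) (hbetween : ∀ c ∈ l, a < c → ¬c < b) :
    ∃ l₁ l₂, l = l₁ ++ a :: b :: l₂ := by
  obtain ⟨l₁, r, rfl⟩ := List.append_of_mem ha
  have hbr : b ∈ r := by
    simp only [List.pairwise_append, List.pairwise_cons, List.mem_cons] at hl
    simp only [List.mem_append, List.mem_cons] at hb
    rcases hb with hb | rfl | hb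
    · exact absurd (hl.2.2 b hb a (Or.inl rfl)) hab.not_gt
    · exact absurd hab (lt_irrefl _)
    · exact hb
  obtain ⟨d, r', rfl⟩ := List.exists_cons_of_ne_nil (List.ne_nil_of_mem hbr)
  simp only [List.pairwise_append, List.pairwise_cons, List.mem_cons] at hl
  have had : a < d := hl.2.1.1 d (Or.inl rfl)
  have hdb : d ≤ b := by
    rcases List.mem_cons.1 hbr with rfl | hb
    · exact le_rfl
    · exact (hl.2.1.2.1 b hb).le
  obtain rfl : d = b := le_antisymm hdb (not_lt.1 (hbetween d (by simp) had))
  exact ⟨l₁, r', rfl⟩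

theorem not_mem_of_pairwise_lt_append_cons_cons (hl : (l₁ ++ a :: b :: l₂).Pairwise (· < ·))
    (hac : a < c) (hcb : c < b) : c ∉ l₁ ++ a :: b :: l₂ := by
  simp only [List.pairwise_append, List.pairwise_cons, List.mem_cons, List.mem_append] at hl ⊢
  rintro (hc | rfl | rfl | hc)
  · exact lt_asymm hac (hl.2.2 c hc a (Or.inl rfl))
  · exact lt_irrefl _ hac
  · exact lt_irrefl _ hcb
  · exact lt_asymm hcb (hl.2.1.2.1 c hc)

end Sorted

def Covered {ι : Type*} (Γ : Set (ι × ι)) (i : ι) : Prop := ∃ p ∈ Γ, p.1 = i ∨ p.2 = i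

theorem covered_diff_singleton_iff {ι : Type*} {Γ : Set (ι × ι)} {p : ι × ι} {i : ι}
    (h₁ : i ≠ p.1) (h₂ : i ≠ p.2) : Covered (Γ \ {p}) i ↔ Covered Γ i := by
  refine ⟨fun ⟨q, hq, hqi⟩ => ⟨q, hq.1, hqi⟩, fun ⟨q, hq, hqi⟩ => ⟨q, ⟨hq, ?_⟩, hqi⟩⟩
  rintro rfl
  rcases hqi with rfl | rfl <;> simp_all

theorem Covered.mono {ι : Type*} {Γ Γ' : Set (ι × ι)} {i : ι} (h : Γ ⊆ Γ') :
    Covered Γ i → Covered Γ' i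
  | ⟨q, hq, hqi⟩ => ⟨q, h hq, hqi⟩

/-- `NCIP` for the subword of `f` read along the increasing index list `l`; deleting a pair then
only shortens `l`, with no reindexing. -/
structure NCIPOn {ι : Type*} [LinearOrder ι] (f : ι → Letter D) (l : List ι)
    (Γ : Set (ι × ι)) : Prop where
  mem : ∀ p ∈ Γ, p.1 ∈ l ∧ p.2 ∈ l
  lt : ∀ p ∈ Γ, p.1 < p.2
  inv : ∀ p ∈ Γ, IsInvLetter (f p.1) (f p.2)
  disj : ∀ p ∈ Γ, ∀ q ∈ Γ, p ≠ q → p.1 ≠ q.1 ∧ p.1 ≠ q.2 ∧ p.2 ≠ q.1 ∧ p.2 ≠ q.2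
  noncross : ∀ p ∈ Γ, ∀ q ∈ Γ, ¬(p.1 < q.1 ∧ q.1 < p.2 ∧ p.2 < q.2)
  covered : ∀ p ∈ Γ, ∀ k ∈ l, p.1 ≤ k → k ≤ p.2 → Covered Γ k

theorem NCIP.ncipOn {W : List (Letter D)} {Γ : Set (Fin W.length × Fin W.length)}
    (hΓ : NCIP W Γ) : NCIPOn W.get (List.finRange W.length) Γ where
  mem _ _ := ⟨List.mem_finRange _, List.mem_finRange _⟩
  lt := hΓ.lt
  inv := hΓ.inv
  disj := hΓ.disj
  noncross := hΓ.noncross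
  covered p hp k _ := hΓ.covered p hp k

namespace NCIPOn

variable {ι : Type*} [LinearOrder ι] {f : ι → Letter D} {l l₁ l₂ : List ι} {Γ : Set (ι × ι)}

/-- The pair whose right end is leftmost works. -/
theorem exists_innermost (hΓ : NCIPOn f l Γ) (hne : Γ.Nonempty) :
    ∃ p ∈ Γ, ∀ c ∈ l, p.1 < c → ¬c < p.2 := by
  have hfin : Γ.Finite :=
    (l.finite_toSet.prod l.finite_toSet).subset fun p hp => hΓ.mem p hp
  obtain ⟨p, hp, hmin⟩ := Set.exists_min_image Γ Prod.snd hfin hne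
  refine ⟨p, hp, fun c hc hpc hcp => ?_⟩
  obtain ⟨q, hq, hqc⟩ := hΓ.covered p hp c hc hpc.le hcp.le
  have hqp : q ≠ p := by rintro rfl; rcases hqc with rfl | rfl <;> exact lt_irrefl _ ‹_›
  have hq₂ : q.2 < p.2 := by
    rcases hqc with rfl | rfl
    · refine lt_of_le_of_ne (not_lt.1 fun h => hΓ.noncross p hp q hq ⟨hpc, hcp, h⟩) ?_
      exact (hΓ.disj q hq p hp hqp).2.2.2
    · exact hcp
  exact (hmin q hq).not_gt hq₂

theorem diff_singleton {p : ι × ι} (hΓ : NCIPOn f (l₁ ++ p.1 :: p.2 :: l₂) Γ)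
    (hl : (l₁ ++ p.1 :: p.2 :: l₂).Nodup) (hp : p ∈ Γ) : NCIPOn f (l₁ ++ l₂) (Γ \ {p}) := by
  have hmem : ∀ i ∈ l₁ ++ p.1 :: p.2 :: l₂, i ≠ p.1 → i ≠ p.2 → i ∈ l₁ ++ l₂ := by
    intro i
    simp only [List.mem_cons, List.mem_append]
    tauto
  refine ⟨fun q hq => ?_, fun q hq => hΓ.lt q hq.1, fun q hq => hΓ.inv q hq.1,
    fun q hq r hr => hΓ.disj q hq.1 r hr.1, fun q hq r hr => hΓ.noncross q hq.1 r hr.1,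
    fun q hq k hk hqk hkq => ?_⟩
  · have hd := hΓ.disj q hq.1 p hp hq.2
    exact ⟨hmem _ (hΓ.mem q hq.1).1 hd.1 hd.2.1, hmem _ (hΓ.mem q hq.1).2 hd.2.2.1 hd.2.2.2⟩
  · obtain ⟨hk₁, hk₂⟩ := ne_of_nodup_append_cons_cons hl hk
    have hsub : (l₁ ++ l₂).Sublist (l₁ ++ p.1 :: p.2 :: l₂) := by simp
    exact (covered_diff_singleton_iff hk₁ hk₂).2 (hΓ.covered q hq.1 k (hsub.subset hk) hqk hkq)

open Classical in
theorem mk_map_filter_not_covered (hl : l.Pairwise (· < ·)) (hΓ : NCIPOn f l Γ) :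
    FreeGroup.mk ((l.filter fun i => ¬Covered Γ i).map f) = FreeGroup.mk (l.map f) := by
  induction hn : l.length using Nat.strong_induction_on generalizing l Γ with
  | _ n ih =>
  rcases Γ.eq_empty_or_nonempty with rfl | hne
  · rw [List.filter_eq_self.2 fun i _ => by simp [Covered]]
  obtain ⟨p, hp, hbetween⟩ := hΓ.exists_innermost hne
  obtain ⟨l₁, l₂, rfl⟩ := exists_eq_append_cons_cons_of_pairwise_lt hl (hΓ.mem p hp).1
    (hΓ.mem p hp).2 (hΓ.lt p hp) hbetween
  have hnd := hl.nodup
  have hfilter : (l₁ ++ p.1 :: p.2 :: l₂).filter (fun i => ¬Covered Γ i) =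
      (l₁ ++ l₂).filter (fun i => ¬Covered (Γ \ {p}) i) := by
    rw [List.filter_append, List.filter_cons_of_neg (by simpa using ⟨p, hp, Or.inl rfl⟩),
      List.filter_cons_of_neg (by simpa using ⟨p, hp, Or.inr rfl⟩), ← List.filter_append]
    refine List.filter_congr fun i hi => ?_
    obtain ⟨hi₁, hi₂⟩ := ne_of_nodup_append_cons_cons hnd hi
    rw [covered_diff_singleton_iff hi₁ hi₂]
  have hsub : (l₁ ++ l₂).Sublist (l₁ ++ p.1 :: p.2 :: l₂) := by simp
  rw [hfilter, ih _ (by simp at hn ⊢; omega) (hl.sublist hsub) (hΓ.diff_singleton hnd hp) rfl]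
  simpa using (mk_append_cons_cons_of_isInvLetter (hΓ.inv p hp)).symm

end NCIPOn

namespace NCIP

variable {W : List (Letter D)} {Γ : Set (Fin W.length × Fin W.length)} {a b : Fin W.length}

theorem insert (hΓ : NCIP W Γ) (hab : a < b) (hinv : IsInvLetter (W.get a) (W.get b))
    (ha : ¬Covered Γ a) (hb : ¬Covered Γ b) (hbetween : ∀ c, a < c → c < b → Covered Γ c) :
    NCIP W (insert (a, b) Γ) := by
  have hfree : ∀ q ∈ Γ, q.1 ≠ a ∧ q.2 ≠ a ∧ q.1 ≠ b ∧ q.2 ≠ b := fun q hq =>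
    ⟨fun h => ha ⟨q, hq, .inl h⟩, fun h => ha ⟨q, hq, .inr h⟩,
      fun h => hb ⟨q, hq, .inl h⟩, fun h => hb ⟨q, hq, .inr h⟩⟩
  refine ⟨Set.forall_mem_insert.2 ⟨hab, hΓ.lt⟩, Set.forall_mem_insert.2 ⟨hinv, hΓ.inv⟩, ?_, ?_, ?_⟩
  · rintro p (rfl | hp) q (rfl | hq) hpq
    · exact absurd rfl hpq
    · obtain ⟨h₁, h₂, h₃, h₄⟩ := hfree q hq
      exact ⟨h₁.symm, h₂.symm, h₃.symm, h₄.symm⟩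
    · obtain ⟨h₁, h₂, h₃, h₄⟩ := hfree p hp
      exact ⟨h₁, h₃, h₂, h₄⟩
    · exact hΓ.disj p hp q hq hpq
  · rintro p (rfl | hp) q (rfl | hq) ⟨h₁, h₂, h₃⟩
    · exact lt_irrefl _ h₁
    · exact hb (hΓ.covered q hq b h₂.le h₃.le)
    · exact ha (hΓ.covered p hp a h₁.le h₂.le)
    · exact hΓ.noncross p hp q hq ⟨h₁, h₂, h₃⟩
  · rintro p (rfl | hp) k hpk hkp
    · rcases hpk.eq_or_lt with hak | hak
      · exact ⟨(a, b), Set.mem_insert _ _, .inl hak⟩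
      rcases hkp.eq_or_lt with hkb | hkb
      · exact ⟨(a, b), Set.mem_insert _ _, .inr hkb.symm⟩
      exact (hbetween k hak hkb).mono (Set.subset_insert _ _)
    · exact Covered.mono (Set.subset_insert _ _) (hΓ.covered p hp k hpk hkp)

theorem not_isInvLetter_of_maximal (hΓ : NCIP W Γ)
    (hmax : ∀ Γ' : Set (Fin W.length × Fin W.length), NCIP W Γ' → Γ ⊆ Γ' → Γ' = Γ)
    (hab : a < b) (ha : ¬Covered Γ a) (hb : ¬Covered Γ b)
    (hbetween : ∀ c, a < c → c < b → Covered Γ c) : ¬IsInvLetter (W.get a) (W.get b) :=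
  fun hinv => ha ⟨(a, b), hmax _ (hΓ.insert hab hinv ha hb hbetween) (Set.subset_insert _ _) ▸
    Set.mem_insert _ _, .inl rfl⟩

open Classical in
theorem isReduced_map_filter_not_covered (hΓ : NCIP W Γ)
    (hmax : ∀ Γ' : Set (Fin W.length × Fin W.length), NCIP W Γ' → Γ ⊆ Γ' → Γ' = Γ) :
    IsReduced (((List.finRange W.length).filter fun i => ¬Covered Γ i).map W.get) := by
  refine (List.isChain_map W.get).2 (List.isChain_iff_forall_rel_of_append_cons_cons.2 ?_)
  intro a b l₁ l₂ hL
  have hmem : ∀ c, c ∈ l₁ ++ a :: b :: l₂ ↔ ¬Covered Γ c := by simp [← hL]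
  have hsorted : (l₁ ++ a :: b :: l₂).Pairwise (· < ·) :=
    hL ▸ (List.pairwise_lt_finRange _).filter _
  have hab : a < b := List.pairwise_pair.1 (hsorted.sublist (by simp))
  refine not_isInvLetter_of_maximal hΓ hmax hab ((hmem a).1 (by simp)) ((hmem b).1 (by simp))
    fun c hac hcb => ?_
  by_contra hc
  exact not_mem_of_pairwise_lt_append_cons_cons hsorted hac hcb ((hmem c).2 hc)

end NCIP

open Classical in
/-- If `Γ` is a maximal noncrossing inverse pairing on a finite word `W`, then the subword `W₀`
obtained by deleting all indices covered by `Γ` represents the same element of the free group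
as `W`, and `W₀` is reduced. -/
theorem subword_of_maximal_ncip_reduced (W : List (Letter D))
    (Γ : Set (Fin W.length × Fin W.length)) (hΓ : NCIP W Γ)
    (hmax : ∀ Γ' : Set (Fin W.length × Fin W.length), NCIP W Γ' → Γ ⊆ Γ' → Γ' = Γ) :
    let W₀ : List (Letter D) :=
      ((List.finRange W.length).filter
        (fun i => decide (¬∃ p ∈ Γ, p.1 = i ∨ p.2 = i))).map W.get
    FreeGroup.mk W₀ = FreeGroup.mk W ∧ IsReduced W₀ := by
  -- `convert` bridges the decidability instance of the unfolded `Covered` in `W₀`.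
  refine ⟨?_, ?_⟩
  · convert (hΓ.ncipOn.mk_map_filter_not_covered (List.pairwise_lt_finRange _)).trans
      (congrArg _ (List.map_get_finRange W))
    exact Iff.rfl
  · convert hΓ.isReduced_map_filter_not_covered hmax
    exact Iff.rfl

end EarringPaper
end

section
/- Let X be a separable metric space with metric ρ_X, D = {d_n : n ∈ ℕ} a countable subset of X, and S¹ the unit circle with a metric ρ_C of diameter less than 1. Define E(X,D) to be the set X × {o} ∪ {d_n} × S¹ (o a fixed basepoint of S¹) with ρ((x,u),(y,v)) = ρ_C(u,v)/n if x = y = d_n, and ρ((x,u),(y,v)) = ρ_X(x,y) + ρ_x(u,o) + ρ_y(v,o) otherwise, where ρ_x(u,o) = ρ_C(u,o)/n if x = d_n and 0 if x ∉ D. Then ρ is a metric on E(X,D). -/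
/-! The earring space `E(X,D)`: attach to the `n`-th point `d n` of a countable subset of a
separable metric space `X` a copy of the circle `C` (an abstract metric circle of diameter
`< 1`), the circle at `d n` scaled by `1/n`.  The claim: the displayed distance `ρ` is a
genuine metric on the carrier. -/

open Classical

noncomputable section

namespace EarringPaper

variable {X C : Type*} [MetricSpace X] [MetricSpace C]

/-- The scaling weight `1/n` at `x = d n` (and `0` off `D`). -/
def wt (d : ℕ+ → X) (x : X) : ℝ :=
  if h : ∃ n : ℕ+, x = d n then 1 / (h.choose : ℝ) else 0

/-- The distance `ρ` on `E(X,D)`:  `ρ_C(u,v)/n` inside the circle attached at `d n`, and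
`ρ_X(x,y) + ρ_x(u,o) + ρ_y(v,o)` otherwise. -/
def rho (d : ℕ+ → X) (o : C) (p q : X × C) : ℝ :=
  if p.1 = q.1 ∧ ∃ n : ℕ+, p.1 = d n then wt d p.1 * dist p.2 q.2
  else dist p.1 q.1 + wt d p.1 * dist p.2 o + wt d q.1 * dist q.2 o

/-- The carrier of `E(X,D)`: the base copy `X × {o}` together with the circles attached at
the points of `D`. -/
def ECar (d : ℕ+ → X) (o : C) : Set (X × C) := {p | p.2 = o ∨ ∃ n : ℕ+, p.1 = d n}

/-- `ρ` is a metric on `E(X,D)`. -/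
theorem rho_is_metric [TopologicalSpace.SeparableSpace X]
    (d : ℕ+ → X) (o : C) (hd : Function.Injective d)
    (hdiam : ∀ u v : C, dist u v < 1) :
    (∀ p q : ECar d o, 0 ≤ rho d o p.val q.val) ∧
    (∀ p q : ECar d o, rho d o p.val q.val = rho d o q.val p.val) ∧
    (∀ p q : ECar d o, rho d o p.val q.val = 0 ↔ p = q) ∧
    (∀ p q r : ECar d o,
      rho d o p.val r.val ≤ rho d o p.val q.val + rho d o q.val r.val) := by
  have hw0 : ∀ x : X, 0 ≤ wt d x := by
    intro x
    unfold wt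
    split
    · positivity
    · exact le_refl 0
  have hwpos : ∀ x : X, (∃ n : ℕ+, x = d n) → 0 < wt d x := by
    intro x hx
    unfold wt
    rw [dif_pos hx]
    positivity
  have hwz : ∀ x : X, ¬(∃ n : ℕ+, x = d n) → wt d x = 0 := fun x hx => dif_neg hx
  refine ⟨?_, ?_, ?_, ?_⟩
  · -- nonnegativity
    rintro ⟨⟨x, u⟩, -⟩ ⟨⟨y, v⟩, -⟩
    simp only [rho]
    split
    · exact mul_nonneg (hw0 _) dist_nonneg
    · have := mul_nonneg (hw0 x) (dist_nonneg (x := u) (y := o))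
      have := mul_nonneg (hw0 y) (dist_nonneg (x := v) (y := o))
      have := dist_nonneg (x := x) (y := y)
      linarith
  · -- symmetry
    rintro ⟨⟨x, u⟩, -⟩ ⟨⟨y, v⟩, -⟩
    simp only [rho]
    by_cases h : x = y
    · subst h
      by_cases hD : ∃ n : ℕ+, x = d n
      · rw [if_pos ⟨rfl, hD⟩, if_pos ⟨rfl, hD⟩, dist_comm]
      · rw [if_neg (fun h => hD h.2), if_neg (fun h => hD h.2)]
        ring
    · rw [if_neg (fun h' => h h'.1), if_neg (fun h' => h h'.1.symm), dist_comm x y]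
      ring
  · -- separation
    rintro ⟨⟨x, u⟩, hp⟩ ⟨⟨y, v⟩, hq⟩
    simp only [ECar, Set.mem_setOf_eq] at hp hq
    simp only [rho, Subtype.mk.injEq, Prod.mk.injEq]
    by_cases h : x = y
    · subst h
      by_cases hD : ∃ n : ℕ+, x = d n
      · rw [if_pos ⟨rfl, hD⟩]
        constructor
        · intro h0
          rcases mul_eq_zero.mp h0 with h1 | h2
          · exact absurd h1 (ne_of_gt (hwpos x hD))
          · exact ⟨rfl, dist_eq_zero.mp h2⟩
        · rintro ⟨-, rfl⟩
          simp
      · rw [if_neg (fun h => hD h.2), hwz x hD]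
        have hu : u = o := hp.resolve_right hD
        have hv : v = o := hq.resolve_right hD
        subst hu; subst hv
        simp
    · rw [if_neg (fun h' => h h'.1)]
      constructor
      · intro h0
        have h1 := mul_nonneg (hw0 x) (dist_nonneg (x := u) (y := o))
        have h2 := mul_nonneg (hw0 y) (dist_nonneg (x := v) (y := o))
        have h3 : dist x y ≤ 0 := by linarith
        exact absurd (dist_eq_zero.mp (le_antisymm h3 dist_nonneg)) h
      · rintro ⟨rfl, -⟩
        exact absurd rfl h
  · -- triangle inequality
    rintro ⟨⟨x, u⟩, -⟩ ⟨⟨y, v⟩, -⟩ ⟨⟨z, w⟩, -⟩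
    simp only [rho]
    by_cases hB : x = y ∧ ∃ n : ℕ+, x = d n
    · obtain ⟨rfl, hD⟩ := hB
      by_cases hC : x = z
      · subst hC
        rw [if_pos ⟨rfl, hD⟩, if_pos ⟨rfl, hD⟩, if_pos ⟨rfl, hD⟩]
        nlinarith [mul_le_mul_of_nonneg_left (dist_triangle u v w) (hw0 x)]
      · rw [if_neg (fun h' => hC h'.1), if_pos ⟨rfl, hD⟩, if_neg (fun h' => hC h'.1)]
        nlinarith [mul_le_mul_of_nonneg_left (dist_triangle u v o) (hw0 x)]
    · by_cases hC : y = z ∧ ∃ n : ℕ+, y = d n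
      · obtain ⟨rfl, hD⟩ := hC
        rw [if_neg hB, if_neg hB, if_pos ⟨rfl, hD⟩]
        have key : dist w o ≤ dist v w + dist v o := by
          rw [dist_comm v w]
          exact dist_triangle w v o
        nlinarith [mul_le_mul_of_nonneg_left key (hw0 y)]
      · rw [if_neg hB, if_neg hC]
        by_cases hA : x = z ∧ ∃ n : ℕ+, x = d n
        · obtain ⟨rfl, hD⟩ := hA
          rw [if_pos ⟨rfl, hD⟩]
          have key : dist u w ≤ dist u o + dist w o := by
            rw [dist_comm w o]
            exact dist_triangle u o w
          nlinarith [mul_le_mul_of_nonneg_left key (hw0 x),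
            dist_nonneg (x := x) (y := y), dist_nonneg (x := y) (y := x),
            mul_nonneg (hw0 y) (dist_nonneg (x := v) (y := o))]
        · rw [if_neg hA]
          have := dist_triangle x y z
          have := mul_nonneg (hw0 y) (dist_nonneg (x := v) (y := o))
          linarith

end EarringPaper
end
end

section
/- If Γ is a noncrossing inverse pairing on an infinitary word W with ⋃Γ = W̄ (the whole index set), then for every finite subset F of D the restriction of Γ to the indices carrying letters from F is a noncrossing inverse pairing on the finite word W_F whose union is all of the index set of W_F; consequently W_F = 1 in the free group on F, and hence W is equivalent to the empty word. -/
noncomputable section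

namespace EarringPaper

/-- An infinitary word over the alphabet `D`: a function from a countable linearly
ordered index set to the letters `a`/`a⁻` (`(a, true)`/`(a, false)`), in which each
letter occurs only finitely often. -/
structure InfWord (D : Type*) where
  ι : Type
  [ord : LinearOrder ι]
  [cnt : Countable ι]
  letter : ι → D × Bool
  finOcc : ∀ a : D, {i : ι | (letter i).1 = a}.Finite

attribute [instance] InfWord.ord InfWord.cnt

variable {D : Type*}

lemma InfWord.finF (W : InfWord D) (F : Finset D) :
    {i : W.ι | (W.letter i).1 ∈ F}.Finite := by
  have h : {i : W.ι | (W.letter i).1 ∈ F} = ⋃ a ∈ F, {i : W.ι | (W.letter i).1 = a} := by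
    ext i; simp
  rw [h]
  exact F.finite_toSet.biUnion fun a _ => W.finOcc a

/-- The finite word `W_F`: the restriction of `W` to the letters from the finite set `F`,
evaluated as an element of the free group on `D`. -/
def InfWord.evalF (W : InfWord D) (F : Finset D) : FreeGroup D :=
  (((W.finF F).toFinset.sort (· ≤ ·)).map fun i => FreeGroup.mk [W.letter i]).prod

/-- `W` is equivalent to the empty word: all its finite restrictions `W_F` are trivial. -/
def InfWord.IsNull (W : InfWord D) : Prop := ∀ F : Finset D, W.evalF F = 1

/-- The subword of `W` supported on a set `S` of indices. -/
def InfWord.restrict (W : InfWord D) (S : Set W.ι) : InfWord D where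
  ι := S
  letter i := W.letter i.val
  finOcc a := by
    have h : {i : S | (W.letter i.val).1 = a} =
        Subtype.val ⁻¹' {i : W.ι | (W.letter i).1 = a} := rfl
    rw [h]
    exact (W.finOcc a).preimage Subtype.val_injective.injOn

/-- An order-convex set of indices (the support of a subword). -/
def IsConvexSub {W : InfWord D} (S : Set W.ι) : Prop :=
  ∀ i ∈ S, ∀ j ∈ S, ∀ k, i ≤ k → k ≤ j → k ∈ S

/-- An infinitary word is reduced if no nonempty subword is equivalent to the empty word. -/
def InfWord.Reduced (W : InfWord D) : Prop :=
  ∀ S : Set W.ι, S.Nonempty → IsConvexSub S → ¬(W.restrict S).IsNull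

/-- A noncrossing inverse pairing on the infinitary word `W`. -/
structure InfNCIP (W : InfWord D) (Γ : Set (W.ι × W.ι)) : Prop where
  lt : ∀ p ∈ Γ, p.1 < p.2
  inv : ∀ p ∈ Γ, (W.letter p.1).1 = (W.letter p.2).1 ∧
    (W.letter p.1).2 = !(W.letter p.2).2
  disj : ∀ p ∈ Γ, ∀ q ∈ Γ, p ≠ q → p.1 ≠ q.1 ∧ p.1 ≠ q.2 ∧ p.2 ≠ q.1 ∧ p.2 ≠ q.2
  noncross : ∀ p ∈ Γ, ∀ q ∈ Γ, ¬(p.1 < q.1 ∧ q.1 < p.2 ∧ p.2 < q.2)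
  covered : ∀ p ∈ Γ, ∀ k, p.1 ≤ k → k ≤ p.2 → ∃ q ∈ Γ, q.1 = k ∨ q.2 = k

end EarringPaper

namespace EarringPaper

/-!
Induct on a finite set `T` of indices that is a union of pairs. Its least index `i` is paired
with some `j`; by noncrossing, every other pair lies either strictly between `i` and `j` or
beyond `j`, so the word on `T` reads `x · u · x⁻¹ · v` with `u`, `v` words on smaller unions
of pairs.
-/

theorem _root_.Finset.sort_eq_filter_lt_append_cons {ι : Type*} [LinearOrder ι] {T : Finset ι}
    {x : ι} (hx : x ∈ T) : T.sort = {k ∈ T | k < x}.sort ++ x :: {k ∈ T | x < k}.sort := by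
  refine T.sortedLT_sort.eq_of_mem_iff ?_ fun a => ?_
  · simp only [List.sortedLT_iff_pairwise, List.pairwise_append, List.pairwise_cons,
      Finset.mem_sort, Finset.mem_filter, List.mem_cons]
    refine ⟨(Finset.sortedLT_sort _).pairwise, ⟨fun b hb => hb.2,
      (Finset.sortedLT_sort _).pairwise⟩, ?_⟩
    rintro a ⟨-, hax⟩ b (rfl | ⟨-, hxb⟩)
    exacts [hax, hax.trans hxb]
  · simp only [Finset.mem_sort, List.mem_append, List.mem_cons, Finset.mem_filter]
    rcases lt_trichotomy a x with h | rfl | h <;> grind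

def PairClosed {ι : Type*} (Γ : Set (ι × ι)) (S : Set ι) : Prop :=
  ∀ p ∈ Γ, p.1 ∈ S ↔ p.2 ∈ S

section

variable {D : Type*}

def InfWord.prodOn (W : InfWord D) (T : Finset W.ι) : FreeGroup D :=
  (T.sort.map fun i => FreeGroup.mk [W.letter i]).prod

theorem InfWord.evalF_eq_prodOn (W : InfWord D) (F : Finset D) :
    W.evalF F = W.prodOn (W.finF F).toFinset := rfl

theorem InfWord.prodOn_empty (W : InfWord D) : W.prodOn ∅ = 1 := by
  simp [InfWord.prodOn]

theorem InfWord.prodOn_eq_of_mem (W : InfWord D) {T : Finset W.ι} {x : W.ι} (hx : x ∈ T) :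
    W.prodOn T = W.prodOn {k ∈ T | k < x} * FreeGroup.mk [W.letter x] *
      W.prodOn {k ∈ T | x < k} := by
  simp only [InfWord.prodOn, Finset.sort_eq_filter_lt_append_cons hx, List.map_append,
    List.map_cons, List.prod_append, List.prod_cons, mul_assoc]

variable {W : InfWord D} {Γ : Set (W.ι × W.ι)}

theorem InfNCIP.mk_mul_mk_eq_one (hΓ : InfNCIP W Γ) {p : W.ι × W.ι} (hp : p ∈ Γ) :
    FreeGroup.mk [W.letter p.1] * FreeGroup.mk [W.letter p.2] = 1 := by
  have hletter : W.letter p.2 = ((W.letter p.1).1, !(W.letter p.1).2) := by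
    obtain ⟨h1, h2⟩ := hΓ.inv p hp
    ext <;> simp [h1, h2]
  have hinv : FreeGroup.mk [((W.letter p.1).1, !(W.letter p.1).2)] =
      (FreeGroup.mk [W.letter p.1])⁻¹ := by
    rw [FreeGroup.inv_mk]
    rfl
  rw [hletter, hinv, mul_inv_cancel]

theorem InfNCIP.snd_mem_Ioo_iff (hΓ : InfNCIP W Γ) {p q : W.ι × W.ι} (hp : p ∈ Γ) (hq : q ∈ Γ)
    (hpq : p ≠ q) : q.2 ∈ Set.Ioo p.1 p.2 ↔ q.1 ∈ Set.Ioo p.1 p.2 := by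
  obtain ⟨h11, -, -, h22⟩ := hΓ.disj p hp q hq hpq
  constructor
  · rintro ⟨h1, h2⟩
    exact ⟨lt_of_le_of_ne (not_lt.1 fun h => hΓ.noncross q hq p hp ⟨h, h1, h2⟩) h11,
      (hΓ.lt q hq).trans h2⟩
  · rintro ⟨h1, h2⟩
    exact ⟨h1.trans (hΓ.lt q hq),
      lt_of_le_of_ne (not_lt.1 fun h => hΓ.noncross p hp q hq ⟨h1, h2, h⟩) h22.symm⟩

theorem InfNCIP.exists_fst_eq_min' (hΓ : InfNCIP W Γ) {T : Finset W.ι} (hne : T.Nonempty)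
    (hcov : ∀ i ∈ T, ∃ p ∈ Γ, p.1 = i ∨ p.2 = i) (hT : PairClosed Γ T) :
    ∃ p ∈ Γ, p.1 = T.min' hne := by
  obtain ⟨p, hp, h | h⟩ := hcov _ (T.min'_mem hne)
  · exact ⟨p, hp, h⟩
  · have hmin := T.min'_le p.1 ((hT p hp).2 (h ▸ T.min'_mem hne))
    exact absurd (h ▸ hΓ.lt p hp) hmin.not_gt

theorem InfNCIP.pairClosed_filter_mem_Ioo (hΓ : InfNCIP W Γ) {T : Finset W.ι}
    {p₀ : W.ι × W.ι} (hp₀ : p₀ ∈ Γ) (hT : PairClosed Γ T) :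
    PairClosed Γ ↑{k ∈ T | k ∈ Set.Ioo p₀.1 p₀.2} := by
  intro p hp
  simp only [Finset.coe_filter, Set.mem_ofPred_eq]
  rcases eq_or_ne p₀ p with rfl | hne
  · simp
  · exact and_congr (hT p hp) (hΓ.snd_mem_Ioo_iff hp₀ hp hne).symm

theorem InfNCIP.pairClosed_filter_snd_lt (hΓ : InfNCIP W Γ) {T : Finset W.ι}
    {p₀ : W.ι × W.ι} (hp₀ : p₀ ∈ Γ) (hmin : ∀ k ∈ T, p₀.1 ≤ k) (hT : PairClosed Γ T) :
    PairClosed Γ ↑{k ∈ T | p₀.2 < k} := by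
  intro p hp
  simp only [Finset.coe_filter, Set.mem_ofPred_eq]
  rcases eq_or_ne p₀ p with rfl | hne
  · simp [(hΓ.lt p₀ hp₀).not_gt]
  have hout : ∀ k ∈ T, k ≠ p₀.1 → k ≠ p₀.2 → (p₀.2 < k ↔ k ∉ Set.Ioo p₀.1 p₀.2) := by
    intro k hk h1 h2
    have hlt : p₀.1 < k := lt_of_le_of_ne (hmin k hk) h1.symm
    simp only [Set.mem_Ioo, hlt, true_and, not_lt]
    exact ⟨le_of_lt, (lt_of_le_of_ne · h2.symm)⟩
  obtain ⟨h11, h12, h21, h22⟩ := hΓ.disj p₀ hp₀ p hp hne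
  refine (and_congr_left' (hT p hp)).trans (and_congr_right fun h2 => ?_)
  have h1 : p.1 ∈ T := (hT p hp).2 h2
  rw [hout _ h1 h11.symm h21.symm, hout _ h2 h12.symm h22.symm, hΓ.snd_mem_Ioo_iff hp₀ hp hne]

theorem InfNCIP.prodOn_eq_one (hΓ : InfNCIP W Γ) (T : Finset W.ι)
    (hcov : ∀ i ∈ T, ∃ p ∈ Γ, p.1 = i ∨ p.2 = i) (hT : PairClosed Γ T) :
    W.prodOn T = 1 := by
  induction T using Finset.strongInduction with
  | H T ih =>
  rcases T.eq_empty_or_nonempty with rfl | hne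
  · exact W.prodOn_empty
  obtain ⟨p₀, hp₀, hi⟩ := hΓ.exists_fst_eq_min' hne hcov hT
  have hmin : ∀ k ∈ T, p₀.1 ≤ k := hi ▸ fun k hk => T.min'_le k hk
  have hiT : p₀.1 ∈ T := hi ▸ T.min'_mem hne
  have hjT : p₀.2 ∈ T := (hT p₀ hp₀).1 hiT
  have hcov' (S : Finset W.ι) (hS : S ⊆ T) : ∀ i ∈ S, ∃ p ∈ Γ, p.1 = i ∨ p.2 = i :=
    fun i hi => hcov i (hS hi)
  have hleft : {k ∈ {k ∈ T | k < p₀.2} | k < p₀.1} = ∅ :=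
    Finset.filter_eq_empty_iff.2 fun k hk => (hmin k (Finset.mem_of_mem_filter k hk)).not_gt
  have hinner : {k ∈ {k ∈ T | k < p₀.2} | p₀.1 < k} = {k ∈ T | k ∈ Set.Ioo p₀.1 p₀.2} := by
    ext k
    simp only [Finset.mem_filter, Set.mem_Ioo]
    tauto
  have hM : W.prodOn {k ∈ T | k ∈ Set.Ioo p₀.1 p₀.2} = 1 :=
    ih _ (Finset.filter_ssubset.2 ⟨p₀.1, hiT, by simp⟩) (hcov' _ (Finset.filter_subset _ _))
      (hΓ.pairClosed_filter_mem_Ioo hp₀ hT)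
  have hR : W.prodOn {k ∈ T | p₀.2 < k} = 1 :=
    ih _ (Finset.filter_ssubset.2 ⟨p₀.2, hjT, lt_irrefl _⟩) (hcov' _ (Finset.filter_subset _ _))
      (hΓ.pairClosed_filter_snd_lt hp₀ hmin hT)
  rw [W.prodOn_eq_of_mem hjT,
    W.prodOn_eq_of_mem (Finset.mem_filter.2 ⟨hiT, hΓ.lt p₀ hp₀⟩), hleft, hinner, hM, hR,
    W.prodOn_empty, one_mul, mul_one, mul_one, hΓ.mk_mul_mk_eq_one hp₀]

theorem exists_pair_restrict_of_covers {S : Set W.ι} (hS : PairClosed Γ S)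
    {q : W.ι × W.ι} (hq : q ∈ Γ) (k : S) (hqk : q.1 = k ∨ q.2 = k) :
    ∃ p ∈ {p : S × S | (p.1.val, p.2.val) ∈ Γ}, p.1 = k ∨ p.2 = k := by
  have hmem : q.1 ∈ S ∧ q.2 ∈ S := by
    rcases hqk with h | h
    · exact ⟨h ▸ k.2, (hS q hq).1 (h ▸ k.2)⟩
    · exact ⟨(hS q hq).2 (h ▸ k.2), h ▸ k.2⟩
  exact ⟨(⟨q.1, hmem.1⟩, ⟨q.2, hmem.2⟩), hq, hqk.imp Subtype.ext Subtype.ext⟩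

theorem InfNCIP.restrict (hΓ : InfNCIP W Γ) {S : Set W.ι} (hS : PairClosed Γ S) :
    InfNCIP (W.restrict S) {p : S × S | (p.1.val, p.2.val) ∈ Γ} where
  lt p hp := hΓ.lt _ hp
  inv p hp := hΓ.inv _ hp
  disj p hp q hq hpq := by
    have hval : (p.1.val, p.2.val) ≠ (q.1.val, q.2.val) := fun h =>
      hpq (Prod.ext (Subtype.ext (congrArg Prod.fst h)) (Subtype.ext (congrArg Prod.snd h)))
    obtain ⟨h11, h12, h21, h22⟩ := hΓ.disj _ hp _ hq hval
    exact ⟨mt (congrArg Subtype.val) h11, mt (congrArg Subtype.val) h12,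
      mt (congrArg Subtype.val) h21, mt (congrArg Subtype.val) h22⟩
  noncross p hp q hq := hΓ.noncross _ hp _ hq
  covered p hp k h1 h2 := by
    obtain ⟨q, hq, hqk⟩ := hΓ.covered _ hp k.1 h1 h2
    exact exists_pair_restrict_of_covers hS hq k hqk

theorem InfNCIP.pairClosed_letter_mem (hΓ : InfNCIP W Γ) (F : Finset D) :
    PairClosed Γ {i | (W.letter i).1 ∈ F} :=
  fun p hp => iff_of_eq (congrArg (· ∈ F) (hΓ.inv p hp).1)

end

/-- Easy direction of the Cannon–Conner criterion: if `Γ` is a noncrossing inverse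
pairing on `W` covering the whole index set, then for every finite `F ⊆ D` the
restriction of `Γ` is a noncrossing inverse pairing on `W_F` covering all of `W_F`;
consequently `W_F = 1` in the free group for every `F`, i.e. `W` is equivalent to the
empty word. -/
theorem infword_null_of_ncip {D : Type*} (W : InfWord D) (Γ : Set (W.ι × W.ι))
    (hΓ : InfNCIP W Γ) (hfull : ∀ i : W.ι, ∃ p ∈ Γ, p.1 = i ∨ p.2 = i) :
    (∀ F : Finset D,
      InfNCIP (W.restrict {i | (W.letter i).1 ∈ F})
        {p : ({i | (W.letter i).1 ∈ F} : Set W.ι) ×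
             ({i | (W.letter i).1 ∈ F} : Set W.ι) | (p.1.val, p.2.val) ∈ Γ} ∧
      ∀ i : ({i | (W.letter i).1 ∈ F} : Set W.ι),
        ∃ p ∈ {p : ({i | (W.letter i).1 ∈ F} : Set W.ι) ×
             ({i | (W.letter i).1 ∈ F} : Set W.ι) | (p.1.val, p.2.val) ∈ Γ},
          p.1 = i ∨ p.2 = i) ∧
    (∀ F : Finset D, W.evalF F = 1) ∧ W.IsNull := by
  have hnull (F : Finset D) : W.evalF F = 1 := by
    rw [W.evalF_eq_prodOn]
    refine hΓ.prodOn_eq_one _ (fun i _ => hfull i) fun p hp => ?_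
    simpa only [Finset.mem_coe, Set.Finite.mem_toFinset] using hΓ.pairClosed_letter_mem F p hp
  refine ⟨fun F => ⟨hΓ.restrict (hΓ.pairClosed_letter_mem F), fun k => ?_⟩, hnull, hnull⟩
  obtain ⟨q, hq, hqk⟩ := hfull k
  exact exists_pair_restrict_of_covers (hΓ.pairClosed_letter_mem F) hq k hqk

end EarringPaper
end
end

section
/- Let X be a metric space, F an 'admissible' family of loops in X, and suppose there is a complete metric subspace of X containing the ranges of all loops in F. Then every loop in F is null-homotopic. Here F is admissible if: (1) for any f ∈ F and δ > 0 there is a punctured homotopy H from f to a constant such that the image of the boundary of each puncture rectangle has diameter < δ and the restriction of H to each puncture boundary is a punctured-homotopy-from-a-member-of-F-to-constant; and (2) for each ε > 0 there is δ > 0 such that every f ∈ F of diameter < δ admits, for every α > 0, a punctured homotopy of diameter < ε from f to constant with puncture boundaries of diameter < α, whose puncture-boundary restrictions again come from members of F. -/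
namespace EarringPaper

variable {X : Type*} [MetricSpace X]

/-- A loop in `X` with domain `[a,b]`. -/
structure LoopIn (X : Type*) [MetricSpace X] where
  f : ℝ → X
  a : ℝ
  b : ℝ
  hab : a < b
  cont : ContinuousOn f (Set.Icc a b)
  closed : f a = f b

/-- The closed rectangle `[p,q] × [r,s]`. -/
def Rect (p q r s : ℝ) : Set (ℝ × ℝ) := Set.Icc p q ×ˢ Set.Icc r s

/-- The open rectangle `(p,q) × (r,s)`. -/
def OpenRect (p q r s : ℝ) : Set (ℝ × ℝ) := Set.Ioo p q ×ˢ Set.Ioo r s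

/-- The boundary of the rectangle `[p,q] × [r,s]`. -/
def BdryRect (p q r s : ℝ) : Set (ℝ × ℝ) := Rect p q r s \ OpenRect p q r s

/-- `H` is bound for constant on `[p,q] × [r,s]`: it is constant on the bottom edge and
the two vertical edges. -/
def BoundForConst (H : ℝ × ℝ → X) (p q r s : ℝ) : Prop :=
  (∀ t ∈ Set.Icc p q, H (t, r) = H (p, r)) ∧
  (∀ u ∈ Set.Icc r s, H (p, u) = H (p, r) ∧ H (q, u) = H (p, r))

/-- A punctured homotopy on `[p,q] × [r,s]` with punctures the open rectangles listed in
`Rs` (a puncture `R ∈ Rs` is recorded by its corners: `R = ((p_i, q_i), (r_i, s_i))`). -/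
structure IsPH (H : ℝ × ℝ → X) (p q r s : ℝ) (Rs : Set ((ℝ × ℝ) × (ℝ × ℝ))) : Prop where
  sub : ∀ R ∈ Rs, p ≤ R.1.1 ∧ R.1.1 < R.1.2 ∧ R.1.2 ≤ q ∧
    r ≤ R.2.1 ∧ R.2.1 < R.2.2 ∧ R.2.2 ≤ s
  disj : ∀ R ∈ Rs, ∀ R' ∈ Rs, R ≠ R' →
    Disjoint (OpenRect R.1.1 R.1.2 R.2.1 R.2.2) (OpenRect R'.1.1 R'.1.2 R'.2.1 R'.2.2)
  cont : ContinuousOn H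
    (Rect p q r s \ ⋃ R ∈ Rs, OpenRect R.1.1 R.1.2 R.2.1 R.2.2)
  bdd : BoundForConst H p q r s
  bddR : ∀ R ∈ Rs, BoundForConst H R.1.1 R.1.2 R.2.1 R.2.2

/-- Each puncture boundary of `H` has image of diameter `< δ` and carries (on its top
edge) a punctured homotopy from a member of `F` to constant. -/
def GoodPunctures (F : Set (LoopIn X)) (H : ℝ × ℝ → X)
    (Rs : Set ((ℝ × ℝ) × (ℝ × ℝ))) (δ : ℝ) : Prop :=
  ∀ R ∈ Rs, Metric.diam (H '' BdryRect R.1.1 R.1.2 R.2.1 R.2.2) < δ ∧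
    ∃ g ∈ F, g.a = R.1.1 ∧ g.b = R.1.2 ∧
      ∀ t ∈ Set.Icc g.a g.b, H (t, R.2.2) = g.f t

/-- An admissible family of loops. -/
def Admissible (F : Set (LoopIn X)) : Prop :=
  (∀ f ∈ F, ∀ δ > (0 : ℝ), ∃ c dd : ℝ, c < dd ∧
    ∃ (H : ℝ × ℝ → X) (Rs : Set ((ℝ × ℝ) × (ℝ × ℝ))), IsPH H f.a f.b c dd Rs ∧
      (∀ t ∈ Set.Icc f.a f.b, H (t, dd) = f.f t) ∧ GoodPunctures F H Rs δ) ∧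
  (∀ ε > (0 : ℝ), ∃ δ > (0 : ℝ), ∀ f ∈ F,
    Metric.diam (f.f '' Set.Icc f.a f.b) < δ → ∀ α > (0 : ℝ),
      ∃ c dd : ℝ, c < dd ∧
      ∃ (H : ℝ × ℝ → X) (Rs : Set ((ℝ × ℝ) × (ℝ × ℝ))), IsPH H f.a f.b c dd Rs ∧
        (∀ t ∈ Set.Icc f.a f.b, H (t, dd) = f.f t) ∧
        Metric.diam (H ''
          (Rect f.a f.b c dd \ ⋃ R ∈ Rs, OpenRect R.1.1 R.1.2 R.2.1 R.2.2)) < ε ∧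
        GoodPunctures F H Rs α)

/-- A loop is null-homotopic: there is a genuine (unpunctured) homotopy, bound for
constant, from the loop to a constant. -/
def NullHtpc (L : LoopIn X) : Prop :=
  ∃ H : ℝ × ℝ → X, ContinuousOn H (Rect L.a L.b 0 1) ∧
    (∀ t ∈ Set.Icc L.a L.b, H (t, 1) = L.f t) ∧ BoundForConst H L.a L.b 0 1

open Filter Topology

/-! Fill the punctures recursively. A puncture whose boundary image has diameter `D > 0` is
filled, through admissibility (2), by a punctured homotopy of image diameter `≤ (1/2)^m`, where
`m` is the largest level with `D < scale m`; its own punctures have boundary images smaller than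
`scale (m+1)`, so levels increase strictly along every descent. Descending `n` times gives
values forming a geometrically Cauchy sequence, whose terms are puncture-corner values (in the
complete set `Y`) unless it is eventually constant, so it converges. For continuity, stopping
the descent at punctures of diameter `< scale M` moves the limit by at most `2 (1/2)^M` and
gives a map whose jumps are at most about `(1/2)^M`, because each piece has only finitely many
punctures of diameter `≥ scale M`. -/

abbrev holeOpen (R : (ℝ × ℝ) × (ℝ × ℝ)) : Set (ℝ × ℝ) := OpenRect R.1.1 R.1.2 R.2.1 R.2.2

abbrev holeRect (R : (ℝ × ℝ) × (ℝ × ℝ)) : Set (ℝ × ℝ) := Rect R.1.1 R.1.2 R.2.1 R.2.2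

abbrev holeBdry (R : (ℝ × ℝ) × (ℝ × ℝ)) : Set (ℝ × ℝ) :=
  BdryRect R.1.1 R.1.2 R.2.1 R.2.2

def PDom (p q r s : ℝ) (Rs : Set ((ℝ × ℝ) × (ℝ × ℝ))) : Set (ℝ × ℝ) :=
  Rect p q r s \ ⋃ R ∈ Rs, holeOpen R

section Rectangles

variable {p q r s : ℝ}

lemma isOpen_openRect : IsOpen (OpenRect p q r s) := isOpen_Ioo.prod isOpen_Ioo

lemma isClosed_rect : IsClosed (Rect p q r s) := isClosed_Icc.prod isClosed_Icc

lemma isCompact_rect : IsCompact (Rect p q r s) := isCompact_Icc.prod isCompact_Icc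

lemma openRect_subset_rect : OpenRect p q r s ⊆ Rect p q r s :=
  Set.prod_mono Set.Ioo_subset_Icc_self Set.Ioo_subset_Icc_self

lemma closure_openRect (hpq : p < q) (hrs : r < s) :
    closure (OpenRect p q r s) = Rect p q r s := by
  rw [OpenRect, closure_prod_eq, closure_Ioo hpq.ne, closure_Ioo hrs.ne, Rect]

lemma mem_bdryRect_iff {z : ℝ × ℝ} (hz : z ∈ Rect p q r s) :
    z ∈ BdryRect p q r s ↔ z.1 = p ∨ z.1 = q ∨ z.2 = r ∨ z.2 = s := by
  obtain ⟨⟨h1, h2⟩, h3, h4⟩ := hz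
  simp only [BdryRect, OpenRect, Set.mem_sdiff, Set.mem_prod, Set.mem_Ioo]
  constructor
  · rintro ⟨-, hno⟩
    by_contra! hc
    exact hno ⟨⟨h1.lt_of_ne hc.1.symm, h2.lt_of_ne hc.2.1⟩, h3.lt_of_ne hc.2.2.1.symm,
      h4.lt_of_ne hc.2.2.2⟩
  · rintro hc
    refine ⟨⟨⟨h1, h2⟩, h3, h4⟩, ?_⟩
    rintro ⟨⟨o1, o2⟩, o3, o4⟩
    rcases hc with e | e | e | e <;> linarith

lemma top_mem_bdryRect {t : ℝ} (ht : t ∈ Set.Icc p q) (hrs : r ≤ s) :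
    (t, s) ∈ BdryRect p q r s :=
  (mem_bdryRect_iff ⟨ht, hrs, le_rfl⟩).2 (Or.inr (Or.inr (Or.inr rfl)))

lemma corner_mem_bdryRect (hpq : p ≤ q) (hrs : r ≤ s) : (p, r) ∈ BdryRect p q r s :=
  (mem_bdryRect_iff (z := (p, r)) ⟨⟨le_rfl, hpq⟩, le_rfl, hrs⟩).2 (Or.inl rfl)

/-- `z` is found on the segment from `x` to `y`, which is connected. -/
lemma exists_mem_bdryRect_dist_le {x y : ℝ × ℝ} (hx : x ∉ OpenRect p q r s)
    (hy : y ∈ OpenRect p q r s) : ∃ z ∈ BdryRect p q r s, dist z x ≤ dist y x := by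
  by_contra! h
  have hxR : x ∉ Rect p q r s := fun hxR => (h x ⟨hxR, hx⟩).not_ge (by simp)
  have hseg : segment ℝ x y ⊆ OpenRect p q r s ∪ (Rect p q r s)ᶜ := by
    intro z hz
    by_cases hzR : z ∈ Rect p q r s
    · refine Or.inl (by_contra fun hzO => (h z ⟨hzR, hzO⟩).not_ge ?_)
      have := dist_add_dist_of_mem_segment hz
      rw [dist_comm z x, dist_comm y x]
      linarith [dist_nonneg (x := z) (y := y)]
    · exact Or.inr hzR
  obtain ⟨z, -, hzO, hzR⟩ := (convex_segment x y).isPreconnected _ _ isOpen_openRect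
    isClosed_rect.isOpen_compl hseg ⟨y, right_mem_segment ℝ x y, hy⟩
    ⟨x, left_mem_segment ℝ x y, hxR⟩
  exact hzR (openRect_subset_rect hzO)

lemma finite_of_pairwiseDisjoint_openRect {S : Set ((ℝ × ℝ) × (ℝ × ℝ))}
    {B : Set (ℝ × ℝ)} {σ : ℝ} (hσ : 0 < σ) (hdisj : S.PairwiseDisjoint holeOpen)
    (hsub : ∀ R ∈ S, holeOpen R ⊆ B) (hB : MeasureTheory.volume B ≠ ⊤)
    (hside : ∀ R ∈ S, σ ≤ R.1.2 - R.1.1 ∧ σ ≤ R.2.2 - R.2.1) : S.Finite := by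
  have hvol : ∀ R ∈ S, ENNReal.ofReal σ * ENNReal.ofReal σ ≤
      MeasureTheory.volume (holeOpen R) := by
    intro R hR
    simp only [holeOpen, OpenRect]
    rw [MeasureTheory.Measure.volume_eq_prod, MeasureTheory.Measure.prod_prod,
      Real.volume_Ioo, Real.volume_Ioo]
    exact mul_le_mul' (ENNReal.ofReal_le_ofReal (hside R hR).1)
      (ENNReal.ofReal_le_ofReal (hside R hR).2)
  have hfin := MeasureTheory.Measure.finite_const_le_meas_of_disjoint_iUnion
    MeasureTheory.volume (by positivity : 0 < ENNReal.ofReal σ * ENNReal.ofReal σ)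
    (As := fun R : S => holeOpen R) (fun _ => isOpen_openRect.measurableSet)
    (fun R R' hne => hdisj R.2 R'.2 (Subtype.coe_ne_coe.2 hne))
    (ne_top_of_le_ne_top hB (MeasureTheory.measure_mono (Set.iUnion_subset fun R => hsub R R.2)))
  have hS : (Set.univ : Set S).Finite := hfin.subset fun R _ => hvol R R.2
  exact Set.finite_coe_iff.1 (Set.finite_univ_iff.1 hS)

end Rectangles

lemma continuousWithinAt_of_forall_approx {α β : Type*} [TopologicalSpace α]
    [PseudoMetricSpace β] {f : α → β} {s : Set α} {x : α} (hx : x ∈ s)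
    (h : ∀ ε > 0, ∃ g : α → β, (∀ y ∈ s, dist (f y) (g y) ≤ ε) ∧
      ∀ᶠ y in 𝓝[s] x, dist (g y) (g x) ≤ ε) :
    ContinuousWithinAt f s x := by
  refine Metric.tendsto_nhds.2 fun ε hε => ?_
  obtain ⟨g, hfg, hg⟩ := h (ε / 4) (by positivity)
  filter_upwards [hg, self_mem_nhdsWithin] with y hy hys
  linarith [dist_triangle4 (f y) (g y) (g x) (f x), hfg y hys, hfg x hx, dist_comm (g x) (f x)]

lemma limUnder_atTop_succ {α : Type*} [TopologicalSpace α] [Nonempty α] (u : ℕ → α) :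
    limUnder atTop (fun n => u (n + 1)) = limUnder atTop u := by
  rw [limUnder, limUnder, show (fun n => u (n + 1)) = u ∘ (· + 1) from rfl, ← map_map,
    map_add_atTop_eq_nat]

section BoundForConst

variable {α : Type*} {H H' : ℝ × ℝ → α} {p q r s : ℝ}

lemma BoundForConst.apply_eq_of_ne_top (h : BoundForConst H p q r s) {z : ℝ × ℝ}
    (hz : z ∈ BdryRect p q r s) (hzs : z.2 ≠ s) : H z = H (p, r) := by
  obtain ⟨⟨h1, h2⟩, h3, h4⟩ := hz.1
  rcases (mem_bdryRect_iff hz.1).1 hz with e | e | e | e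
  · rw [← (h.2 z.2 ⟨h3, h4⟩).1, ← e]
  · rw [← (h.2 z.2 ⟨h3, h4⟩).2, ← e]
  · rw [← h.1 z.1 ⟨h1, h2⟩, ← e]
  · exact absurd e hzs

lemma BoundForConst.top_left (h : BoundForConst H p q r s) (hrs : r ≤ s) :
    H (p, s) = H (p, r) :=
  (h.2 s ⟨hrs, le_rfl⟩).1

lemma BoundForConst.image_bdryRect (h : BoundForConst H p q r s) (hpq : p ≤ q) (hrs : r ≤ s) :
    H '' BdryRect p q r s = (fun t => H (t, s)) '' Set.Icc p q := by
  refine subset_antisymm ?_ ?_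
  · rintro _ ⟨z, hz, rfl⟩
    by_cases hzs : z.2 = s
    · exact ⟨z.1, hz.1.1, by rw [← hzs]⟩
    · exact ⟨p, ⟨le_rfl, hpq⟩, (h.top_left hrs).trans (h.apply_eq_of_ne_top hz hzs).symm⟩
  · rintro _ ⟨t, ht, rfl⟩
    exact ⟨(t, s), top_mem_bdryRect ht hrs, rfl⟩

lemma BoundForConst.eqOn_bdryRect (h : BoundForConst H p q r s) (h' : BoundForConst H' p q r s)
    (hpq : p ≤ q) (hrs : r ≤ s) (htop : ∀ t ∈ Set.Icc p q, H (t, s) = H' (t, s)) :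
    Set.EqOn H H' (BdryRect p q r s) := by
  intro z hz
  by_cases hzs : z.2 = s
  · simpa [← hzs] using htop z.1 hz.1.1
  · rw [h.apply_eq_of_ne_top hz hzs, h'.apply_eq_of_ne_top hz hzs, ← h.top_left hrs,
      ← h'.top_left hrs]
    exact htop p ⟨le_rfl, hpq⟩

lemma BoundForConst.congr (h : BoundForConst H p q r s) (heq : Set.EqOn H H' (BdryRect p q r s))
    (hpq : p ≤ q) (hrs : r ≤ s) : BoundForConst H' p q r s := by
  have hmem : ∀ z ∈ Rect p q r s, z.1 = p ∨ z.1 = q ∨ z.2 = r ∨ z.2 = s →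
      H' z = H z := fun z hz he => (heq ((mem_bdryRect_iff hz).2 he)).symm
  have hcorner := hmem (p, r) ⟨⟨le_rfl, hpq⟩, le_rfl, hrs⟩ (Or.inl rfl)
  refine ⟨fun t ht => ?_, fun u hu => ?_⟩
  · rw [hcorner, hmem (t, r) ⟨ht, le_rfl, hrs⟩ (by simp), h.1 t ht]
  · rw [hcorner, hmem (p, u) ⟨⟨le_rfl, hpq⟩, hu⟩ (Or.inl rfl),
      hmem (q, u) ⟨⟨hpq, le_rfl⟩, hu⟩ (by simp)]
    exact h.2 u hu

lemma boundForConst_const (v : α) : BoundForConst (fun _ => v) p q r s :=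
  ⟨fun _ _ => rfl, fun _ _ => ⟨rfl, rfl⟩⟩

end BoundForConst

section VerticalReparametrization

variable {H : ℝ × ℝ → X} {p q r s : ℝ} {Rs : Set ((ℝ × ℝ) × (ℝ × ℝ))}
  (φ : ℝ ≃o ℝ)

lemma exists_orderIso_apply_eq {c d : ℝ} (hcd : c < d) (hrs : r < s) :
    ∃ φ : ℝ ≃o ℝ, φ c = r ∧ φ d = s := by
  have hk : 0 < (s - r) / (d - c) := div_pos (by linarith) (by linarith)
  refine ⟨((OrderIso.addRight (-c)).trans (OrderIso.mulRight₀ _ hk)).trans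
    (OrderIso.addRight r), ?_, ?_⟩
  · simp
  · have hdc : d - c ≠ 0 := (sub_pos.2 hcd).ne'
    simp only [OrderIso.trans_apply, OrderIso.addRight_apply, OrderIso.mulRight₀_apply]
    field_simp
    ring

def vertMap (R : (ℝ × ℝ) × (ℝ × ℝ)) : (ℝ × ℝ) × (ℝ × ℝ) :=
  (R.1, (φ R.2.1, φ R.2.2))

lemma preimage_rect_vert : Prod.map id φ.symm ⁻¹' Rect p q r s = Rect p q (φ r) (φ s) := by
  simp only [Rect, Set.preimage_prod_map_prod, Set.preimage_id, OrderIso.preimage_Icc,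
    OrderIso.symm_symm]

lemma preimage_openRect_vert :
    Prod.map id φ.symm ⁻¹' OpenRect p q r s = OpenRect p q (φ r) (φ s) := by
  simp only [OpenRect, Set.preimage_prod_map_prod, Set.preimage_id, OrderIso.preimage_Ioo,
    OrderIso.symm_symm]

lemma preimage_bdryRect_vert :
    Prod.map id φ.symm ⁻¹' BdryRect p q r s = BdryRect p q (φ r) (φ s) := by
  rw [BdryRect, Set.preimage_sdiff, preimage_rect_vert, preimage_openRect_vert, BdryRect]

lemma preimage_pDom_vert :
    Prod.map id φ.symm ⁻¹' PDom p q r s Rs = PDom p q (φ r) (φ s) (vertMap φ '' Rs) := by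
  simp only [PDom, Set.preimage_sdiff, Set.preimage_iUnion₂, Set.biUnion_image,
    preimage_rect_vert, preimage_openRect_vert, vertMap]

lemma image_comp_vert {α : Type*} {H : ℝ × ℝ → α} (A : Set (ℝ × ℝ)) :
    (H ∘ Prod.map id φ.symm) '' (Prod.map id φ.symm ⁻¹' A) = H '' A := by
  rw [Set.image_comp, Set.image_preimage_eq _
    (Function.surjective_id.prodMap φ.symm.surjective)]

lemma BoundForConst.comp_vert {α : Type*} {H : ℝ × ℝ → α} (h : BoundForConst H p q r s) :
    BoundForConst (H ∘ Prod.map id φ.symm) p q (φ r) (φ s) := by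
  refine ⟨fun t ht => ?_, fun u hu => ?_⟩
  · simpa only [Function.comp, Prod.map, id, φ.symm_apply_apply] using h.1 t ht
  · have hu' : φ.symm u ∈ Set.Icc r s := ⟨φ.le_symm_apply.2 hu.1, φ.symm_apply_le.2 hu.2⟩
    simpa only [Function.comp, Prod.map, id, φ.symm_apply_apply] using h.2 _ hu'

lemma IsPH.comp_vert (h : IsPH H p q r s Rs) :
    IsPH (H ∘ Prod.map id φ.symm) p q (φ r) (φ s) (vertMap φ '' Rs) where
  sub := by
    rintro _ ⟨R, hR, rfl⟩
    obtain ⟨h1, h2, h3, h4, h5, h6⟩ := h.sub R hR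
    exact ⟨h1, h2, h3, φ.monotone h4, φ.strictMono h5, φ.monotone h6⟩
  disj := by
    rintro _ ⟨R, hR, rfl⟩ _ ⟨R', hR', rfl⟩ hne
    have hd := (h.disj R hR R' hR' fun e => hne (e ▸ rfl)).preimage (Prod.map id φ.symm)
    rwa [preimage_openRect_vert, preimage_openRect_vert] at hd
  cont := by
    change ContinuousOn _ (PDom _ _ _ _ _)
    rw [← preimage_pDom_vert]
    exact h.cont.comp (continuous_id.prodMap φ.symm.continuous).continuousOn
      (Set.mapsTo_preimage _ _)
  bdd := h.bdd.comp_vert φ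
  bddR := by
    rintro _ ⟨R, hR, rfl⟩
    exact (h.bddR R hR).comp_vert φ

lemma GoodPunctures.comp_vert {F : Set (LoopIn X)} {δ : ℝ} (h : GoodPunctures F H Rs δ) :
    GoodPunctures F (H ∘ Prod.map id φ.symm) (vertMap φ '' Rs) δ := by
  rintro _ ⟨R, hR, rfl⟩
  obtain ⟨hdiam, g, hg, ha, hb, htop⟩ := h R hR
  refine ⟨?_, g, hg, ha, hb, fun t ht => ?_⟩
  · simpa only [vertMap, ← preimage_bdryRect_vert, image_comp_vert] using hdiam
  · simpa [vertMap] using htop t ht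

lemma IsPH.exists_vert_reparam {c d : ℝ} (h : IsPH H p q c d Rs) (hcd : c < d) (hrs : r < s) :
    ∃ (H' : ℝ × ℝ → X) (Rs' : Set ((ℝ × ℝ) × (ℝ × ℝ))), IsPH H' p q r s Rs' ∧
      H' '' PDom p q r s Rs' = H '' PDom p q c d Rs ∧ (∀ t, H' (t, s) = H (t, d)) ∧
      ∀ (F : Set (LoopIn X)) (δ : ℝ),
        GoodPunctures F H Rs δ → GoodPunctures F H' Rs' δ := by
  obtain ⟨φ, rfl, rfl⟩ := exists_orderIso_apply_eq hcd hrs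
  refine ⟨H ∘ Prod.map id φ.symm, vertMap φ '' Rs, h.comp_vert φ, ?_, fun t => ?_,
    fun F δ hg => hg.comp_vert φ⟩
  · rw [← preimage_pDom_vert, image_comp_vert]
  · simp

end VerticalReparametrization

section PuncturedHomotopy

variable {H : ℝ × ℝ → X} {p q r s : ℝ} {Rs : Set ((ℝ × ℝ) × (ℝ × ℝ))}
  {R R' : (ℝ × ℝ) × (ℝ × ℝ)} {x : ℝ × ℝ}

lemma mem_pDom_iff :
    x ∈ PDom p q r s Rs ↔ x ∈ Rect p q r s ∧ ∀ R ∈ Rs, x ∉ holeOpen R := by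
  simp [PDom]

lemma isCompact_pDom : IsCompact (PDom p q r s Rs) :=
  isCompact_rect.diff (isOpen_biUnion fun _ _ => isOpen_openRect)

noncomputable def holeDiam (H : ℝ × ℝ → X) (R : (ℝ × ℝ) × (ℝ × ℝ)) : ℝ :=
  Metric.diam (H '' holeBdry R)

namespace IsPH

lemma holeOpen_subset (h : IsPH H p q r s Rs) (hR : R ∈ Rs) :
    holeOpen R ⊆ OpenRect p q r s := by
  obtain ⟨h1, -, h3, h4, -, h6⟩ := h.sub R hR
  exact Set.prod_mono (Set.Ioo_subset_Ioo h1 h3) (Set.Ioo_subset_Ioo h4 h6)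

lemma holeRect_subset (h : IsPH H p q r s Rs) (hR : R ∈ Rs) : holeRect R ⊆ Rect p q r s := by
  obtain ⟨h1, -, h3, h4, -, h6⟩ := h.sub R hR
  exact Set.prod_mono (Set.Icc_subset_Icc h1 h3) (Set.Icc_subset_Icc h4 h6)

lemma eq_of_mem_holeOpen (h : IsPH H p q r s Rs) (hR : R ∈ Rs) (hR' : R' ∈ Rs)
    (hx : x ∈ holeOpen R) (hx' : x ∈ holeOpen R') : R = R' :=
  by_contra fun hne => Set.disjoint_left.1 (h.disj R hR R' hR' hne) hx hx'

lemma holeBdry_subset_pDom (h : IsPH H p q r s Rs) (hR : R ∈ Rs) :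
    holeBdry R ⊆ PDom p q r s Rs := by
  rintro z ⟨hzR, hzO⟩
  refine ⟨h.holeRect_subset hR hzR, fun hz => ?_⟩
  obtain ⟨R', hR', hzR'⟩ := Set.mem_iUnion₂.1 hz
  obtain rfl | hne := eq_or_ne R' R
  · exact hzO hzR'
  · obtain ⟨-, h2, -, -, h5, -⟩ := h.sub R hR
    have hd := (h.disj R' hR' R hR hne).closure_right isOpen_openRect
    rw [closure_openRect h2 h5] at hd
    exact Set.disjoint_left.1 hd hzR' hzR

lemma bdryRect_subset_pDom (h : IsPH H p q r s Rs) : BdryRect p q r s ⊆ PDom p q r s Rs := by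
  rintro z ⟨hzR, hzO⟩
  refine ⟨hzR, fun hz => ?_⟩
  obtain ⟨R, hR, hzR'⟩ := Set.mem_iUnion₂.1 hz
  exact hzO (h.holeOpen_subset hR hzR')

lemma isBounded_image (h : IsPH H p q r s Rs) : Bornology.IsBounded (H '' PDom p q r s Rs) :=
  (isCompact_pDom.image_of_continuousOn h.cont).isBounded

lemma image_holeBdry (h : IsPH H p q r s Rs) (hR : R ∈ Rs) :
    H '' holeBdry R = (fun t => H (t, R.2.2)) '' Set.Icc R.1.1 R.1.2 := by
  obtain ⟨-, h2, -, -, h5, -⟩ := h.sub R hR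
  exact (h.bddR R hR).image_bdryRect h2.le h5.le

lemma dist_le_holeDiam (h : IsPH H p q r s Rs) (hR : R ∈ Rs) {y z : ℝ × ℝ}
    (hy : y ∈ holeBdry R) (hz : z ∈ holeBdry R) :
    dist (H y) (H z) ≤ holeDiam H R :=
  Metric.dist_le_diam_of_mem (h.isBounded_image.subset (Set.image_mono
    (h.holeBdry_subset_pDom hR))) ⟨y, hy, rfl⟩ ⟨z, hz, rfl⟩

/-- If the puncture is thin vertically, every top-edge value is close to the constant value on
the bottom edge. -/
lemma holeDiam_le_of_side_lt (h : IsPH H p q r s Rs) (hR : R ∈ Rs) {σ ε : ℝ} (hε : 0 ≤ ε)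
    (hUC : ∀ y ∈ PDom p q r s Rs, ∀ z ∈ PDom p q r s Rs,
      dist y z < σ → dist (H y) (H z) < ε)
    (hside : R.1.2 - R.1.1 < σ ∨ R.2.2 - R.2.1 < σ) : holeDiam H R ≤ 2 * ε := by
  obtain ⟨-, h2, -, -, h5, -⟩ := h.sub R hR
  have hmem : ∀ t ∈ Set.Icc R.1.1 R.1.2, ∀ u ∈ Set.Icc R.2.1 R.2.2,
      u = R.2.1 ∨ u = R.2.2 → (t, u) ∈ PDom p q r s Rs := fun t ht u hu hu' =>
    h.holeBdry_subset_pDom hR ((mem_bdryRect_iff ⟨ht, hu⟩).2 (by tauto))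
  have hkey : ∀ t ∈ Set.Icc R.1.1 R.1.2, ∀ t' ∈ Set.Icc R.1.1 R.1.2,
      dist (H (t, R.2.2)) (H (t', R.2.2)) ≤ 2 * ε := by
    intro t ht t' ht'
    have htop := hmem t ht R.2.2 ⟨h5.le, le_rfl⟩ (Or.inr rfl)
    have htop' := hmem t' ht' R.2.2 ⟨h5.le, le_rfl⟩ (Or.inr rfl)
    rcases hside with hw | hh
    · refine (hUC _ htop _ htop' ?_).le.trans (by linarith)
      simp only [Prod.dist_eq, dist_self, Real.dist_eq]
      exact max_lt (abs_sub_lt_iff.2 ⟨by linarith [ht.2, ht'.1], by linarith [ht.1, ht'.2]⟩)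
        (by linarith [h5])
    · have hv : ∀ t ∈ Set.Icc R.1.1 R.1.2, dist (H (t, R.2.2)) (H (R.1.1, R.2.1)) < ε := by
        intro t ht
        rw [← (h.bddR R hR).1 t ht]
        refine hUC _ (hmem t ht R.2.2 ⟨h5.le, le_rfl⟩ (Or.inr rfl)) _
          (hmem t ht R.2.1 ⟨le_rfl, h5.le⟩ (Or.inl rfl)) ?_
        simp only [Prod.dist_eq, dist_self, Real.dist_eq, abs_of_pos (sub_pos.2 h5)]
        exact max_lt (by linarith [h5]) hh
      linarith [dist_triangle_right (H (t, R.2.2)) (H (t', R.2.2)) (H (R.1.1, R.2.1)),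
        hv t ht, hv t' ht']
  rw [holeDiam, h.image_holeBdry hR]
  refine Metric.diam_le_of_forall_dist_le (by linarith) ?_
  rintro _ ⟨t, ht, rfl⟩ _ ⟨t', ht', rfl⟩
  exact hkey t ht t' ht'

/-- Punctures with a short side have small `holeDiam` by uniform continuity; the others are
disjoint with area bounded below. -/
lemma finite_setOf_le_holeDiam (h : IsPH H p q r s Rs) {ε : ℝ} (hε : 0 < ε) :
    {R | R ∈ Rs ∧ ε ≤ holeDiam H R}.Finite := by
  obtain ⟨σ, hσ, hUC⟩ := Metric.uniformContinuousOn_iff.1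
    (isCompact_pDom.uniformContinuousOn_of_continuous h.cont) (ε / 4) (by positivity)
  refine finite_of_pairwiseDisjoint_openRect hσ (fun R hR R' hR' hne => h.disj R hR.1 R' hR'.1 hne)
    (fun R hR => (h.holeOpen_subset hR.1).trans openRect_subset_rect) ?_ fun R hR => ?_
  · rw [Rect, MeasureTheory.Measure.volume_eq_prod, MeasureTheory.Measure.prod_prod,
      Real.volume_Icc, Real.volume_Icc]
    exact ENNReal.mul_ne_top ENNReal.ofReal_ne_top ENNReal.ofReal_ne_top
  · by_contra! hthin
    have := h.holeDiam_le_of_side_lt hR.1 (by positivity) hUC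
      ((le_or_gt σ _).imp_left hthin).symm
    linarith [hR.2]

lemma eventually_dist_corner_lt (h : IsPH H p q r s Rs) (hx : x ∈ PDom p q r s Rs) {η : ℝ}
    (hη : 0 < η) :
    ∀ᶠ y in 𝓝 x, ∀ R ∈ Rs, y ∈ holeOpen R →
      dist (H (R.1.1, R.2.1)) (H x) < holeDiam H R + η := by
  obtain ⟨ρ, hρ, hH⟩ := Metric.continuousWithinAt_iff.1 (h.cont x hx) η hη
  filter_upwards [Metric.ball_mem_nhds x hρ] with y hy R hR hyR
  obtain ⟨z, hz, hzx⟩ := exists_mem_bdryRect_dist_le ((mem_pDom_iff.1 hx).2 R hR) hyR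
  obtain ⟨-, h2, -, -, h5, -⟩ := h.sub R hR
  have hcorner := h.dist_le_holeDiam hR (corner_mem_bdryRect h2.le h5.le) hz
  have hnear := hH (h.holeBdry_subset_pDom hR hz) (hzx.trans_lt hy)
  linarith [dist_triangle (H (R.1.1, R.2.1)) (H z) (H x)]

end IsPH

end PuncturedHomotopy

lemma isPH_const {p q r s : ℝ} (v : X) : IsPH (fun _ => v) p q r s ∅ :=
  ⟨by simp, by simp, continuousOn_const, boundForConst_const v, by simp⟩

namespace Admissible

variable {F : Set (LoopIn X)} (hF : Admissible F)

/-- The `δ` of admissibility condition (2) for `ε = (1/2)^n`. -/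
noncomputable def smallness (n : ℕ) : ℝ := Classical.choose (hF.2 ((1/2) ^ n) (by positivity))

lemma smallness_pos (n : ℕ) : 0 < hF.smallness n :=
  (Classical.choose_spec (hF.2 ((1/2) ^ n) (by positivity))).1

noncomputable def scale : ℕ → ℝ
  | 0 => min (hF.smallness 0) 1
  | n + 1 => min (scale n) (min (hF.smallness (n + 1)) ((1/2) ^ (n + 1)))

lemma scale_pos (n : ℕ) : 0 < hF.scale n := by
  induction n with
  | zero => exact lt_min (hF.smallness_pos 0) one_pos
  | succ n ih => exact lt_min ih (lt_min (hF.smallness_pos _) (by positivity))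

lemma scale_le_smallness (n : ℕ) : hF.scale n ≤ hF.smallness n := by
  cases n with
  | zero => exact min_le_left _ _
  | succ n => exact (min_le_right _ _).trans (min_le_left _ _)

lemma scale_le_half_pow (n : ℕ) : hF.scale n ≤ (1/2) ^ n := by
  cases n with
  | zero => exact (min_le_right _ _).trans (by norm_num)
  | succ n => exact (min_le_right _ _).trans (min_le_right _ _)

lemma scale_antitone : Antitone hF.scale :=
  antitone_nat_of_succ_le fun _ => min_le_left _ _

lemma exists_of_diam_lt_scale {n : ℕ} {f : LoopIn X} (hf : f ∈ F)
    (hd : Metric.diam (f.f '' Set.Icc f.a f.b) < hF.scale n) {α : ℝ} (hα : 0 < α) :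
    ∃ c d : ℝ, c < d ∧ ∃ (H : ℝ × ℝ → X) (Rs : Set ((ℝ × ℝ) × (ℝ × ℝ))),
      IsPH H f.a f.b c d Rs ∧ (∀ t ∈ Set.Icc f.a f.b, H (t, d) = f.f t) ∧
      Metric.diam (H '' PDom f.a f.b c d Rs) < (1/2) ^ n ∧ GoodPunctures F H Rs α :=
  (Classical.choose_spec (hF.2 ((1/2) ^ n) (by positivity))).2 f hf
    (hd.trans_le (hF.scale_le_smallness n)) α hα

noncomputable def level (D : ℝ) : ℕ := sSup {n | D < hF.scale n}

lemma bddAbove_setOf_lt_scale {D : ℝ} (hD : 0 < D) : BddAbove {n | D < hF.scale n} := by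
  obtain ⟨N, hN⟩ := exists_pow_lt_of_lt_one hD (by norm_num : (1/2 : ℝ) < 1)
  refine ⟨N, fun n hn => not_lt.1 fun hNn => ?_⟩
  have := (hF.scale_antitone hNn.le).trans (hF.scale_le_half_pow N)
  linarith [hn.out]

lemma le_level {D : ℝ} (hD : 0 < D) {k : ℕ} (hk : D < hF.scale k) : k ≤ hF.level D :=
  le_csSup (hF.bddAbove_setOf_lt_scale hD) hk

lemma lt_scale_level {D : ℝ} (hD : 0 < D) {k : ℕ} (hk : D < hF.scale k) :
    D < hF.scale (hF.level D) :=
  Nat.sSup_mem ⟨k, hk⟩ (hF.bddAbove_setOf_lt_scale hD)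

end Admissible

variable {F : Set (LoopIn X)}

/-- A punctured homotopy at level `L`; each puncture gets filled by a piece of higher level. -/
structure Piece (hF : Admissible F) where
  p : ℝ
  q : ℝ
  r : ℝ
  s : ℝ
  hpq : p < q
  hrs : r < s
  K : ℝ × ℝ → X
  Rs : Set ((ℝ × ℝ) × (ℝ × ℝ))
  L : ℕ
  isPH : IsPH K p q r s Rs
  good : GoodPunctures F K Rs (hF.scale (L + 1))
  diam_le : 0 < L → Metric.diam (K '' PDom p q r s Rs) ≤ (1/2) ^ L

namespace Piece

variable {hF : Admissible F} (P : Piece hF) {R : (ℝ × ℝ) × (ℝ × ℝ)} {x : ℝ × ℝ}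

abbrev rect : Set (ℝ × ℝ) := Rect P.p P.q P.r P.s

abbrev dom : Set (ℝ × ℝ) := PDom P.p P.q P.r P.s P.Rs

lemma corner_mem_dom : (P.p, P.r) ∈ P.dom :=
  P.isPH.bdryRect_subset_pDom (corner_mem_bdryRect P.hpq.le P.hrs.le)

lemma dist_le_of_mem_image (hL : 0 < P.L) {v w : X} (hv : v ∈ P.K '' P.dom)
    (hw : w ∈ P.K '' P.dom) : dist v w ≤ (1/2) ^ P.L :=
  (Metric.dist_le_diam_of_mem P.isPH.isBounded_image hv hw).trans (P.diam_le hL)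

lemma corner_mem_Y {Y : Set X} (hFY : ∀ f ∈ F, f.f '' Set.Icc f.a f.b ⊆ Y) (hR : R ∈ P.Rs) :
    P.K (R.1.1, R.2.1) ∈ Y := by
  obtain ⟨-, g, hg, ha, hb, htop⟩ := P.good R hR
  obtain ⟨-, h2, -, -, h5, -⟩ := P.isPH.sub R hR
  rw [← (P.isPH.bddR R hR).top_left h5.le, htop _ (by rw [ha, hb]; exact ⟨le_rfl, h2.le⟩)]
  exact hFY g hg ⟨_, by rw [ha, hb]; exact ⟨le_rfl, h2.le⟩, rfl⟩

/-- The constant alternative covers punctures whose boundary is mapped to a point: these have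
no largest `M` with `holeDiam < scale M`. -/
structure IsChild (R : (ℝ × ℝ) × (ℝ × ℝ)) (Q : Piece hF) : Prop where
  p_eq : Q.p = R.1.1
  q_eq : Q.q = R.1.2
  r_eq : Q.r = R.2.1
  s_eq : Q.s = R.2.2
  level_lt : P.L < Q.L
  eqOn : Set.EqOn Q.K P.K (holeBdry R)
  lt_scale : holeDiam P.K R < hF.scale Q.L
  le_level : ∀ M, holeDiam P.K R < hF.scale M →
    M ≤ Q.L ∨ (Q.Rs = ∅ ∧ ∀ z, Q.K z = P.K (R.1.1, R.2.1))

lemma exists_isChild_of_holeDiam_eq_zero (hR : R ∈ P.Rs) (h0 : holeDiam P.K R = 0) :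
    ∃ Q, P.IsChild R Q := by
  obtain ⟨-, h2, -, -, h5, -⟩ := P.isPH.sub R hR
  refine ⟨{ p := R.1.1, q := R.1.2, r := R.2.1, s := R.2.2, hpq := h2, hrs := h5
            K := fun _ => P.K (R.1.1, R.2.1), Rs := ∅, L := P.L + 1, isPH := isPH_const _
            good := by simp [GoodPunctures]
            diam_le := fun _ => ?_ }, rfl, rfl, rfl, rfl, P.L.lt_succ_self, fun z hz => ?_,
    by simpa [h0] using hF.scale_pos _, fun M _ => Or.inr ⟨rfl, fun _ => rfl⟩⟩
  · rw [Metric.diam_subsingleton (Set.subsingleton_singleton.anti (Set.image_subset_iff.2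
      fun _ _ => rfl))]
    positivity
  · have := P.isPH.dist_le_holeDiam hR hz (corner_mem_bdryRect h2.le h5.le)
    rw [h0] at this
    exact (dist_le_zero.1 this).symm

lemma exists_isChild_of_holeDiam_pos (hR : R ∈ P.Rs) (hpos : 0 < holeDiam P.K R) :
    ∃ Q, P.IsChild R Q := by
  obtain ⟨hdiam, g, hg, ha, hb, htop⟩ := P.good R hR
  obtain ⟨-, h2, -, -, h5, -⟩ := P.isPH.sub R hR
  have himg : g.f '' Set.Icc g.a g.b = P.K '' holeBdry R := by
    rw [P.isPH.image_holeBdry hR, ha, hb]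
    exact Set.image_congr fun t ht => (htop t (by rwa [ha, hb])).symm
  set m := hF.level (holeDiam P.K R)
  have hm : holeDiam P.K R < hF.scale m := hF.lt_scale_level hpos hdiam
  obtain ⟨c, d, hcd, H, Rs, hPH, htopH, hdiamH, hgoodH⟩ :=
    hF.exists_of_diam_lt_scale hg (by rw [himg]; exact hm) (hF.scale_pos (m + 1))
  obtain ⟨H', Rs', hPH', himg', htop', hgood'⟩ := hPH.exists_vert_reparam hcd h5
  rw [ha, hb] at hPH' himg' hdiamH
  refine ⟨{ p := R.1.1, q := R.1.2, r := R.2.1, s := R.2.2, hpq := h2, hrs := h5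
            K := H', Rs := Rs', L := m, isPH := hPH', good := hgood' F _ hgoodH
            diam_le := fun _ => himg' ▸ hdiamH.le }, rfl, rfl, rfl, rfl,
    hF.le_level hpos hdiam, ?_, hm, fun M hM => Or.inl (hF.le_level hpos hM)⟩
  refine hPH'.bdd.eqOn_bdryRect (P.isPH.bddR R hR) h2.le h5.le fun t ht => ?_
  rw [htop', htopH t (by rwa [ha, hb]), htop t (by rwa [ha, hb])]

lemma exists_isChild (hR : R ∈ P.Rs) : ∃ Q, P.IsChild R Q :=
  (Metric.diam_nonneg.eq_or_lt).elim (fun h0 => P.exists_isChild_of_holeDiam_eq_zero hR h0.symm)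
    (P.exists_isChild_of_holeDiam_pos hR)

open Classical in
noncomputable def child (R : (ℝ × ℝ) × (ℝ × ℝ)) : Piece hF :=
  if hR : R ∈ P.Rs then (P.exists_isChild hR).choose else P

lemma isChild_child (hR : R ∈ P.Rs) : P.IsChild R (P.child R) := by
  rw [child, dif_pos hR]
  exact (P.exists_isChild hR).choose_spec

lemma rect_child (hR : R ∈ P.Rs) : (P.child R).rect = holeRect R := by
  obtain ⟨hp, hq, hr, hs, -⟩ := P.isChild_child hR
  rw [rect, hp, hq, hr, hs]

lemma mem_rect_child (hR : R ∈ P.Rs) (hx : x ∈ holeOpen R) : x ∈ (P.child R).rect :=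
  P.rect_child hR ▸ openRect_subset_rect hx

lemma corner_child (hR : R ∈ P.Rs) :
    (P.child R).K ((P.child R).p, (P.child R).r) = P.K (R.1.1, R.2.1) := by
  obtain ⟨hp, -, hr, -, -, heq, -⟩ := P.isChild_child hR
  obtain ⟨-, h2, -, -, h5, -⟩ := P.isPH.sub R hR
  rw [hp, hr]
  exact heq (corner_mem_bdryRect h2.le h5.le)

lemma forall_notMem_child (hR : R ∈ P.Rs) (hx : x ∉ holeOpen R) :
    ∀ S ∈ (P.child R).Rs, x ∉ holeOpen S := by
  obtain ⟨hp, hq, hr, hs, -⟩ := P.isChild_child hR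
  intro S hS hxS
  have := (P.child R).isPH.holeOpen_subset hS hxS
  rw [hp, hq, hr, hs] at this
  exact hx this

variable {δ : ℝ}

open Classical in
/-- Descend at most `n` times through the punctures containing `x`, not entering punctures
whose boundary image has diameter `< δ`; where the descent stops inside a puncture, the value
at its lower left corner is taken. -/
noncomputable def approx (δ : ℝ) : ℕ → Piece hF → ℝ × ℝ → X
  | 0, P, x =>
    if h : ∃ R ∈ P.Rs, x ∈ holeOpen R then P.K (h.choose.1.1, h.choose.2.1) else P.K x
  | n + 1, P, x =>
    if h : ∃ R ∈ P.Rs, x ∈ holeOpen R then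
      (if holeDiam P.K h.choose < δ then P.K (h.choose.1.1, h.choose.2.1)
        else approx δ n (P.child h.choose) x)
    else P.K x

lemma choose_eq {P : Piece hF} (h : ∃ R ∈ P.Rs, x ∈ holeOpen R) (hR : R ∈ P.Rs)
    (hx : x ∈ holeOpen R) : h.choose = R :=
  P.isPH.eq_of_mem_holeOpen h.choose_spec.1 hR h.choose_spec.2 hx

lemma approx_of_forall_notMem {P : Piece hF} (hx : ∀ R ∈ P.Rs, x ∉ holeOpen R) (n : ℕ) :
    P.approx δ n x = P.K x := by
  have h : ¬ ∃ R ∈ P.Rs, x ∈ holeOpen R := fun ⟨R, hR, hxR⟩ => hx R hR hxR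
  cases n <;> simp only [approx, dif_neg h]

lemma approx_zero_of_mem {P : Piece hF} (hR : R ∈ P.Rs) (hx : x ∈ holeOpen R) :
    P.approx δ 0 x = P.K (R.1.1, R.2.1) := by
  have h : ∃ R ∈ P.Rs, x ∈ holeOpen R := ⟨R, hR, hx⟩
  simp only [approx, dif_pos h, choose_eq h hR hx]

lemma approx_succ_of_lt {P : Piece hF} (hR : R ∈ P.Rs) (hx : x ∈ holeOpen R)
    (hd : holeDiam P.K R < δ) (n : ℕ) : P.approx δ (n + 1) x = P.K (R.1.1, R.2.1) := by
  have h : ∃ R ∈ P.Rs, x ∈ holeOpen R := ⟨R, hR, hx⟩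
  simp only [approx, dif_pos h, choose_eq h hR hx, if_pos hd]

lemma approx_succ_of_not_lt {P : Piece hF} (hR : R ∈ P.Rs) (hx : x ∈ holeOpen R)
    (hd : ¬ holeDiam P.K R < δ) (n : ℕ) :
    P.approx δ (n + 1) x = (P.child R).approx δ n x := by
  have h : ∃ R ∈ P.Rs, x ∈ holeOpen R := ⟨R, hR, hx⟩
  simp only [approx, dif_pos h, choose_eq h hR hx, if_neg hd]

lemma approx_zero_succ {P : Piece hF} (hR : R ∈ P.Rs) (hx : x ∈ holeOpen R) (n : ℕ) :
    P.approx 0 (n + 1) x = (P.child R).approx 0 n x :=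
  approx_succ_of_not_lt hR hx Metric.diam_nonneg.not_gt n

lemma approx_zero_mem_image (P : Piece hF) (hx : x ∈ P.rect) :
    P.approx δ 0 x ∈ P.K '' P.dom := by
  by_cases h : ∃ R ∈ P.Rs, x ∈ holeOpen R
  · obtain ⟨R, hR, hxR⟩ := h
    rw [approx_zero_of_mem hR hxR]
    obtain ⟨-, h2, -, -, h5, -⟩ := P.isPH.sub R hR
    exact ⟨_, P.isPH.holeBdry_subset_pDom hR (corner_mem_bdryRect h2.le h5.le), rfl⟩
  · push Not at h
    rw [approx_of_forall_notMem h]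
    exact ⟨x, mem_pDom_iff.2 ⟨hx, h⟩, rfl⟩

lemma dist_approx_zero_corner_le (P : Piece hF) (hR : R ∈ P.Rs) (hx : x ∈ holeOpen R) :
    dist ((P.child R).approx δ 0 x) (P.K (R.1.1, R.2.1)) ≤ (1/2) ^ (P.child R).L := by
  rw [← P.corner_child hR]
  exact (P.child R).dist_le_of_mem_image (Nat.zero_lt_of_lt (P.isChild_child hR).level_lt)
    ((P.child R).approx_zero_mem_image (P.mem_rect_child hR hx)) ⟨_, corner_mem_dom _, rfl⟩

lemma dist_approx_zero_succ_le (n : ℕ) (P : Piece hF) (x : ℝ × ℝ) :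
    dist (P.approx 0 n x) (P.approx 0 (n + 1) x) ≤ (1/2) ^ (P.L + 1) * (1/2) ^ n := by
  induction n generalizing P with
  | zero =>
    by_cases h : ∃ R ∈ P.Rs, x ∈ holeOpen R
    · obtain ⟨R, hR, hxR⟩ := h
      rw [approx_zero_of_mem hR hxR, approx_zero_succ hR hxR, dist_comm, pow_zero, mul_one]
      exact (P.dist_approx_zero_corner_le hR hxR).trans (pow_le_pow_of_le_one (by norm_num)
        (by norm_num) (P.isChild_child hR).level_lt)
    · push Not at h
      simp [approx_of_forall_notMem h]
  | succ n ih =>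
    by_cases h : ∃ R ∈ P.Rs, x ∈ holeOpen R
    · obtain ⟨R, hR, hxR⟩ := h
      rw [approx_zero_succ hR hxR, approx_zero_succ hR hxR]
      refine (ih (P.child R)).trans ?_
      rw [← pow_add, ← pow_add]
      have := (P.isChild_child hR).level_lt
      exact pow_le_pow_of_le_one (by norm_num) (by norm_num) (by omega)
    · push Not at h
      simp [approx_of_forall_notMem h]

lemma approx_zero_stable_or_mem {Y : Set X} (hFY : ∀ f ∈ F, f.f '' Set.Icc f.a f.b ⊆ Y)
    (n : ℕ) (P : Piece hF) (x : ℝ × ℝ) :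
    (∀ m ≥ n, P.approx 0 m x = P.approx 0 n x) ∨ P.approx 0 n x ∈ Y := by
  induction n generalizing P with
  | zero =>
    by_cases h : ∃ R ∈ P.Rs, x ∈ holeOpen R
    · obtain ⟨R, hR, hxR⟩ := h
      exact Or.inr (approx_zero_of_mem hR hxR ▸ P.corner_mem_Y hFY hR)
    · push Not at h
      exact Or.inl fun m _ => by rw [approx_of_forall_notMem h, approx_of_forall_notMem h]
  | succ n ih =>
    by_cases h : ∃ R ∈ P.Rs, x ∈ holeOpen R
    · obtain ⟨R, hR, hxR⟩ := h
      rw [approx_zero_succ hR hxR]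
      refine (ih (P.child R)).imp_left fun hst m hm => ?_
      obtain ⟨m, rfl⟩ : ∃ m', m = m' + 1 := ⟨m - 1, by omega⟩
      rw [approx_zero_succ hR hxR, hst m (by omega)]
    · push Not at h
      exact Or.inl fun m _ => by rw [approx_of_forall_notMem h, approx_of_forall_notMem h]

noncomputable def limit (P : Piece hF) (x : ℝ × ℝ) : X :=
  haveI : Nonempty X := ⟨P.K x⟩
  limUnder atTop fun n => P.approx 0 n x

lemma limit_eq_child (P : Piece hF) (hR : R ∈ P.Rs) (hx : x ∈ holeOpen R) :
    P.limit x = (P.child R).limit x := by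
  have : Nonempty X := ⟨P.K x⟩
  unfold limit
  rw [← limUnder_atTop_succ]
  simp only [approx_zero_succ hR hx]

lemma limit_of_forall_notMem (P : Piece hF) (hx : ∀ R ∈ P.Rs, x ∉ holeOpen R) :
    P.limit x = P.K x := by
  simp only [limit, approx_of_forall_notMem hx]
  exact tendsto_const_nhds.limUnder_eq

lemma limit_eq_of_mem_dom (P : Piece hF) (hx : x ∈ P.dom) : P.limit x = P.K x :=
  P.limit_of_forall_notMem (mem_pDom_iff.1 hx).2

variable {Y : Set X}

/-- The approximations are Cauchy; they either stay in the complete set `Y`, or stop at a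
point of the domain of some piece and become constant. -/
lemma tendsto_limit (hY : IsComplete Y) (hFY : ∀ f ∈ F, f.f '' Set.Icc f.a f.b ⊆ Y)
    (P : Piece hF) (x : ℝ × ℝ) :
    Tendsto (fun n => P.approx 0 n x) atTop (𝓝 (P.limit x)) := by
  refine tendsto_nhds_limUnder ?_
  by_cases hall : ∀ n, P.approx 0 n x ∈ Y
  · obtain ⟨v, -, hv⟩ := cauchySeq_tendsto_of_isComplete hY hall
      (cauchySeq_of_le_geometric _ _ (by norm_num) (dist_approx_zero_succ_le · P x))
    exact ⟨v, hv⟩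
  · push Not at hall
    obtain ⟨n, hn⟩ := hall
    exact ⟨_, tendsto_atTop_of_eventually_const
      ((approx_zero_stable_or_mem hFY n P x).resolve_right hn)⟩

lemma dist_approx_zero_limit_le (hY : IsComplete Y)
    (hFY : ∀ f ∈ F, f.f '' Set.Icc f.a f.b ⊆ Y) (P : Piece hF) (x : ℝ × ℝ) (n : ℕ) :
    dist (P.approx 0 n x) (P.limit x) ≤ (1/2) ^ (P.L + n) := by
  refine (dist_le_of_le_geometric_of_tendsto _ _ (by norm_num) (dist_approx_zero_succ_le · P x)
    (P.tendsto_limit hY hFY x) n).trans_eq ?_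
  rw [pow_add, pow_succ]
  ring

lemma dist_limit_corner_le (hY : IsComplete Y) (hFY : ∀ f ∈ F, f.f '' Set.Icc f.a f.b ⊆ Y)
    (P : Piece hF) (hR : R ∈ P.Rs) (hx : x ∈ holeOpen R) :
    dist (P.limit x) (P.K (R.1.1, R.2.1)) ≤ 2 * (1/2) ^ (P.child R).L := by
  rw [P.limit_eq_child hR hx, two_mul]
  calc dist ((P.child R).limit x) (P.K (R.1.1, R.2.1))
      ≤ dist ((P.child R).limit x) ((P.child R).approx 0 0 x) +
        dist ((P.child R).approx 0 0 x) (P.K (R.1.1, R.2.1)) := dist_triangle _ _ _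
    _ ≤ (1/2) ^ (P.child R).L + (1/2) ^ (P.child R).L := by
      rw [dist_comm]
      exact add_le_add ((P.child R).dist_approx_zero_limit_le hY hFY x 0)
        (P.dist_approx_zero_corner_le hR hx)

lemma dist_limit_approx_le (hY : IsComplete Y) (hFY : ∀ f ∈ F, f.f '' Set.Icc f.a f.b ⊆ Y)
    {M : ℕ} (k : ℕ) (P : Piece hF) (hk : M ≤ P.L + k) (x : ℝ × ℝ) :
    dist (P.limit x) (P.approx (hF.scale M) k x) ≤ 2 * (1/2) ^ M := by
  have hhalf : ∀ {m n : ℕ}, m ≤ n → ((1:ℝ)/2) ^ n ≤ (1/2) ^ m :=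
    pow_le_pow_of_le_one (by norm_num) (by norm_num)
  induction k generalizing P with
  | zero =>
    rw [dist_comm]
    exact ((P.dist_approx_zero_limit_le hY hFY x 0).trans (hhalf hk)).trans
      (le_mul_of_one_le_left (by positivity) one_le_two)
  | succ k ih =>
    by_cases h : ∃ R ∈ P.Rs, x ∈ holeOpen R
    · obtain ⟨R, hR, hxR⟩ := h
      have hQ := P.isChild_child hR
      by_cases hd : holeDiam P.K R < hF.scale M
      · rw [approx_succ_of_lt hR hxR hd]
        rcases hQ.le_level M hd with hM | ⟨hRs, hK⟩
        · exact (P.dist_limit_corner_le hY hFY hR hxR).trans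
            (mul_le_mul_of_nonneg_left (hhalf hM) zero_le_two)
        · rw [P.limit_eq_child hR hxR, limit_of_forall_notMem _ (by simp [hRs]), hK,
            dist_self]
          positivity
      · rw [approx_succ_of_not_lt hR hxR hd, P.limit_eq_child hR hxR]
        exact ih _ (by have := hQ.level_lt; omega)
    · push Not at h
      rw [limit_of_forall_notMem P h, approx_of_forall_notMem h, dist_self]
      positivity

lemma eventually_dist_approx_child_le {M k : ℕ} {η : ℝ} (P : Piece hF) (hR : R ∈ P.Rs)
    (hk : M ≤ P.L + (k + 1)) (hx : x ∈ P.dom)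
    (ih : ∀ Q : Piece hF, M ≤ Q.L + k → ∀ x ∈ Q.rect, ∀ᶠ y in 𝓝[Q.rect] x,
      dist (Q.approx (hF.scale M) k y) (Q.approx (hF.scale M) k x) ≤ (1/2) ^ M + η) :
    ∀ᶠ y in 𝓝 x, y ∈ holeOpen R →
      dist ((P.child R).approx (hF.scale M) k y) (P.K x) ≤ (1/2) ^ M + η := by
  by_cases hxR : x ∈ holeRect R
  · have hQ := P.isChild_child hR
    have hxO : x ∉ holeOpen R := (mem_pDom_iff.1 hx).2 R hR
    have hxK : (P.child R).approx (hF.scale M) k x = P.K x := by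
      rw [approx_of_forall_notMem (P.forall_notMem_child hR hxO) k]
      exact hQ.eqOn ⟨hxR, hxO⟩
    filter_upwards [eventually_nhdsWithin_iff.1 (ih _ (by have := hQ.level_lt; omega) x
      (P.rect_child hR ▸ hxR))] with y hy hyR
    rw [← hxK]
    exact hy (P.mem_rect_child hR hyR)
  · filter_upwards [isClosed_rect.isOpen_compl.mem_nhds hxR] with y hy hyR
    exact absurd (openRect_subset_rect hyR) hy

lemma eventually_dist_approx_succ_le_of_mem_dom {M k : ℕ} {η : ℝ} (hη : 0 < η) (P : Piece hF)
    (hk : M ≤ P.L + (k + 1)) (hx : x ∈ P.dom)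
    (ih : ∀ Q : Piece hF, M ≤ Q.L + k → ∀ x ∈ Q.rect, ∀ᶠ y in 𝓝[Q.rect] x,
      dist (Q.approx (hF.scale M) k y) (Q.approx (hF.scale M) k x) ≤ (1/2) ^ M + η) :
    ∀ᶠ y in 𝓝[P.rect] x, dist (P.approx (hF.scale M) (k + 1) y)
      (P.approx (hF.scale M) (k + 1) x) ≤ (1/2) ^ M + η := by
  set δ := hF.scale M
  have hxK : P.approx δ (k + 1) x = P.K x := approx_of_forall_notMem (mem_pDom_iff.1 hx).2 _
  have hcont : ∀ᶠ y in 𝓝 x, y ∈ P.dom → dist (P.K y) (P.K x) < η :=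
    eventually_nhdsWithin_iff.1 (Metric.tendsto_nhds.1 (P.isPH.cont x hx) η hη)
  have hlive : ∀ᶠ y in 𝓝 x, ∀ R ∈ {R | R ∈ P.Rs ∧ δ ≤ holeDiam P.K R}, y ∈ holeOpen R →
      dist ((P.child R).approx δ k y) (P.K x) ≤ (1/2) ^ M + η :=
    (eventually_all_finite (P.isPH.finite_setOf_le_holeDiam (hF.scale_pos M))).2
      fun R hR => P.eventually_dist_approx_child_le hR.1 hk hx ih
  rw [eventually_nhdsWithin_iff]
  filter_upwards [hcont, P.isPH.eventually_dist_corner_lt hx hη, hlive] with y hcont hcorner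
    hlive hy
  rw [hxK]
  by_cases h : ∃ R ∈ P.Rs, y ∈ holeOpen R
  · obtain ⟨R, hR, hyR⟩ := h
    by_cases hd : holeDiam P.K R < δ
    · rw [approx_succ_of_lt hR hyR hd]
      linarith [hcorner R hR hyR, hF.scale_le_half_pow M]
    · rw [approx_succ_of_not_lt hR hyR hd]
      exact hlive R ⟨hR, not_lt.1 hd⟩ hyR
  · push Not at h
    rw [approx_of_forall_notMem h]
    linarith [hcont (mem_pDom_iff.2 ⟨hy, h⟩), pow_pos (by norm_num : (0:ℝ) < 1/2) M]

/-- The truncated approximation at level `M` oscillates by at most about `(1/2)^M`: it only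
jumps across punctures it does not enter, whose boundary images are smaller than `scale M`. -/
lemma eventually_dist_approx_le {M : ℕ} (hM : 1 ≤ M) {η : ℝ} (hη : 0 < η) (k : ℕ)
    (P : Piece hF) (hk : M ≤ P.L + k) (x : ℝ × ℝ) (hx : x ∈ P.rect) :
    ∀ᶠ y in 𝓝[P.rect] x, dist (P.approx (hF.scale M) k y) (P.approx (hF.scale M) k x) ≤
      (1/2) ^ M + η := by
  induction k generalizing P x with
  | zero =>
    filter_upwards [self_mem_nhdsWithin] with y hy
    exact ((P.dist_le_of_mem_image (by omega) (P.approx_zero_mem_image hy)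
      (P.approx_zero_mem_image hx)).trans (pow_le_pow_of_le_one (by norm_num) (by norm_num)
      hk)).trans (le_add_of_nonneg_right hη.le)
  | succ k ih =>
    by_cases h : ∃ R ∈ P.Rs, x ∈ holeOpen R
    · obtain ⟨R, hR, hxR⟩ := h
      refine Filter.Eventually.filter_mono nhdsWithin_le_nhds ?_
      by_cases hd : holeDiam P.K R < hF.scale M
      · filter_upwards [isOpen_openRect.mem_nhds hxR] with y hyR
        rw [approx_succ_of_lt hR hyR hd, approx_succ_of_lt hR hxR hd, dist_self]
        positivity
      · have hQ := P.isChild_child hR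
        filter_upwards [isOpen_openRect.mem_nhds hxR, eventually_nhdsWithin_iff.1
          (ih (P.child R) (by have := hQ.level_lt; omega) x (P.mem_rect_child hR hxR))]
          with y hyR hy
        rw [approx_succ_of_not_lt hR hyR hd, approx_succ_of_not_lt hR hxR hd]
        exact hy (P.mem_rect_child hR hyR)
    · push Not at h
      exact P.eventually_dist_approx_succ_le_of_mem_dom hη hk (mem_pDom_iff.2 ⟨hx, h⟩) ih

lemma continuousOn_limit (hY : IsComplete Y) (hFY : ∀ f ∈ F, f.f '' Set.Icc f.a f.b ⊆ Y)
    (P : Piece hF) : ContinuousOn P.limit P.rect := by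
  intro x hx
  refine continuousWithinAt_of_forall_approx hx fun ε hε => ?_
  obtain ⟨M, hM⟩ := exists_pow_lt_of_lt_one (half_pos hε) (by norm_num : (1/2 : ℝ) < 1)
  have hM' : (1/2 : ℝ) ^ (M + 1) * 2 = (1/2) ^ M := by ring
  have hpos : (0 : ℝ) < (1/2) ^ (M + 1) := by positivity
  refine ⟨P.approx (hF.scale (M + 1)) (M + 1), fun y _ => ?_, ?_⟩
  · linarith [P.dist_limit_approx_le hY hFY (M := M + 1) (M + 1) (by omega) y]
  · filter_upwards [P.eventually_dist_approx_le (M := M + 1) (by omega) (half_pos hε) (M + 1)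
      (by omega) x hx] with y hy
    linarith

end Piece

/-- If some complete metric subspace of `X` contains the ranges of all loops of an
admissible family, then every loop in the family is null-homotopic. -/
theorem admissible_family_nullhomotopic (F : Set (LoopIn X)) (hF : Admissible F)
    (hcomp : ∃ Y : Set X, IsComplete Y ∧ ∀ f ∈ F, f.f '' Set.Icc f.a f.b ⊆ Y) :
    ∀ f ∈ F, NullHtpc f := by
  obtain ⟨Y, hY, hFY⟩ := hcomp
  intro f hf
  obtain ⟨c, d, hcd, H, Rs, hPH, htop, hgood⟩ := hF.1 f hf (hF.scale 1) (hF.scale_pos 1)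
  obtain ⟨H', Rs', hPH', -, htop', hgood'⟩ := hPH.exists_vert_reparam hcd zero_lt_one
  let root : Piece hF := ⟨f.a, f.b, 0, 1, f.hab, zero_lt_one, H', Rs', 0, hPH',
    hgood' F _ hgood, fun h => absurd h (lt_irrefl 0)⟩
  have hbdry : Set.EqOn H' root.limit (BdryRect f.a f.b 0 1) := fun z hz =>
    (root.limit_eq_of_mem_dom (hPH'.bdryRect_subset_pDom hz)).symm
  refine ⟨root.limit, root.continuousOn_limit hY hFY, fun t ht => ?_,
    hPH'.bdd.congr hbdry f.hab.le zero_le_one⟩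
  rw [← hbdry (top_mem_bdryRect ht zero_le_one), htop', htop t ht]

end EarringPaper
end
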